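/- arXiv:math/0207204 — 9 statements merged into one kernel-verified Lean document; each statement's English description precedes it below -/
import Mathlib

section
/- For every natural number n ≥ 0, the number of signed permutations in B_n avoiding both patterns in T equals (n+1)! for each of the four pattern sets T = {12, 21}, T = {12, 12̄}, T = {21̄, 12̄}, and T = {21̄, 1̄2}. -/
/-- A signed permutation of length `n`: a permutation of `Fin n` (the absolute
values) together with a sign (bar) for each position. -/
abbrev SignedPerm (n : ℕ) := Equiv.Perm (Fin n) × (Fin n → Bool)

/-- `α` contains the signed pattern `τ`. -/
def SPContains {n k : ℕ} (α : SignedPerm n) (τ : SignedPerm k) : Prop :=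
  ∃ f : Fin k → Fin n, StrictMono f ∧
    (∀ p q : Fin k, τ.1 p < τ.1 q ↔ α.1 (f p) < α.1 (f q)) ∧
    ∀ j : Fin k, α.2 (f j) = τ.2 j

/-- `α` avoids every pattern in `T`. -/
def AvoidsAll {n k : ℕ} (T : Set (SignedPerm k)) (α : SignedPerm n) : Prop :=
  ∀ τ ∈ T, ¬ SPContains α τ

/-- `bn n T` is the number of signed permutations in `B_n` avoiding all patterns of `T`. -/
noncomputable def bn (n : ℕ) (T : Set (SignedPerm 2)) : ℕ :=
  Nat.card {α : SignedPerm n // AvoidsAll T α}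

def p12   : SignedPerm 2 := (Equiv.refl (Fin 2), ![false, false])
def p21   : SignedPerm 2 := (Equiv.swap 0 1,     ![false, false])
def p12b  : SignedPerm 2 := (Equiv.refl (Fin 2), ![false, true])
def p1b2  : SignedPerm 2 := (Equiv.refl (Fin 2), ![true, false])
def p21b  : SignedPerm 2 := (Equiv.swap 0 1,     ![false, true])
def p2b1  : SignedPerm 2 := (Equiv.swap 0 1,     ![true, false])
def p1b2b : SignedPerm 2 := (Equiv.refl (Fin 2), ![true, true])
def p2b1b : SignedPerm 2 := (Equiv.swap 0 1,     ![true, true])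


section SPAux

/-! ### Generic lemmas about containment of length-2 patterns -/

lemma contains2_iff {n : ℕ} (α : SignedPerm n) (e : Equiv.Perm (Fin 2)) (b0 b1 : Bool) :
    SPContains α (e, ![b0, b1]) ↔
      ∃ i j : Fin n, i < j ∧ (e 0 < e 1 ↔ α.1 i < α.1 j) ∧ α.2 i = b0 ∧ α.2 j = b1 := by
  constructor
  · rintro ⟨f, hf, hval, hsgn⟩
    exact ⟨f 0, f 1, hf (by decide), hval 0 1, by simpa using hsgn 0, by simpa using hsgn 1⟩
  · rintro ⟨i, j, hij, hval, h0, h1⟩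
    refine ⟨![i, j], ?_, ?_, ?_⟩
    · intro a b hab
      fin_cases a <;> fin_cases b <;> simp_all
    · have hne : (α.1 i).val ≠ (α.1 j).val := by
        intro h
        exact absurd (α.1.injective (Fin.ext h)) (ne_of_lt hij)
      have hne2 : (e 0).val ≠ (e 1).val := by
        intro h
        exact absurd (e.injective (Fin.ext h)) (by decide)
      intro p q
      have hval' : (e 0).val < (e 1).val ↔ (α.1 i).val < (α.1 j).val := hval
      fin_cases p <;> fin_cases q <;>
        simp only [Fin.mk_zero, Fin.mk_one, Matrix.cons_val_zero, Matrix.cons_val_one,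
          Matrix.head_cons, Fin.lt_def] <;> omega
    · intro jj; fin_cases jj <;> simpa

lemma perm_lt_flip {n : ℕ} (π : Equiv.Perm (Fin n)) {i j : Fin n} (h : i ≠ j) :
    ¬ π i < π j ↔ π j < π i := by
  constructor
  · intro h'
    exact lt_of_le_of_ne (not_lt.mp h') (fun e => h (π.injective e).symm)
  · exact fun h' => lt_asymm h'

lemma contains_inc {n : ℕ} (α : SignedPerm n) (b0 b1 : Bool) :
    SPContains α (Equiv.refl (Fin 2), ![b0, b1]) ↔
      ∃ i j : Fin n, i < j ∧ α.1 i < α.1 j ∧ α.2 i = b0 ∧ α.2 j = b1 := by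
  rw [contains2_iff]
  have : ((Equiv.refl (Fin 2)) 0 < (Equiv.refl (Fin 2)) 1) = True := eq_true (by decide)
  simp [this]

lemma contains_dec {n : ℕ} (α : SignedPerm n) (b0 b1 : Bool) :
    SPContains α (Equiv.swap (0 : Fin 2) 1, ![b0, b1]) ↔
      ∃ i j : Fin n, i < j ∧ α.1 j < α.1 i ∧ α.2 i = b0 ∧ α.2 j = b1 := by
  rw [contains2_iff]
  have h01 : ((Equiv.swap (0 : Fin 2) 1) 0 < (Equiv.swap (0 : Fin 2) 1) 1) = False :=
    eq_false (by decide)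
  constructor
  · rintro ⟨i, j, hij, hval, h0, h1⟩
    rw [h01] at hval
    exact ⟨i, j, hij, (perm_lt_flip α.1 (ne_of_lt hij)).mp (fun hc => hval.mpr hc), h0, h1⟩
  · rintro ⟨i, j, hij, hval, h0, h1⟩
    rw [h01]
    exact ⟨i, j, hij, by simpa using lt_asymm hval, h0, h1⟩

lemma avoids_pair_iff {n : ℕ} (a b : SignedPerm 2) (α : SignedPerm n) :
    AvoidsAll {a, b} α ↔ ¬ SPContains α a ∧ ¬ SPContains α b := by
  simp [AvoidsAll]

/-! ### Characterizations of the four avoidance classes -/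

lemma classA_iff {n : ℕ} (α : SignedPerm n) :
    AvoidsAll {p12, p21} α ↔ ∀ i j : Fin n, α.2 i = false → α.2 j = false → i = j := by
  rw [avoids_pair_iff]
  show ¬ SPContains α (Equiv.refl (Fin 2), ![false, false]) ∧
       ¬ SPContains α (Equiv.swap 0 1, ![false, false]) ↔ _
  rw [contains_inc, contains_dec]
  constructor
  · rintro ⟨h1, h2⟩ i j hi hj
    by_contra hne
    rcases lt_or_gt_of_ne hne with h | h
    · rcases lt_or_gt_of_ne (fun e => hne (α.1.injective e)) with hv | hv
      · exact h1 ⟨i, j, h, hv, hi, hj⟩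
      · exact h2 ⟨i, j, h, hv, hi, hj⟩
    · rcases lt_or_gt_of_ne (fun e => hne (α.1.injective e)) with hv | hv
      · exact h2 ⟨j, i, h, hv, hj, hi⟩
      · exact h1 ⟨j, i, h, hv, hj, hi⟩
  · rintro h
    constructor
    · rintro ⟨i, j, hij, _, hi, hj⟩; exact absurd (h i j hi hj) (ne_of_lt hij)
    · rintro ⟨i, j, hij, _, hi, hj⟩; exact absurd (h i j hi hj) (ne_of_lt hij)

lemma classB_iff {n : ℕ} (α : SignedPerm n) :
    AvoidsAll {p21b, p12b} α ↔ ∀ i j : Fin n, α.2 i = false → α.2 j = true → j < i := by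
  rw [avoids_pair_iff]
  show ¬ SPContains α (Equiv.swap 0 1, ![false, true]) ∧
       ¬ SPContains α (Equiv.refl (Fin 2), ![false, true]) ↔ _
  rw [contains_inc, contains_dec]
  constructor
  · rintro ⟨h1, h2⟩ i j hi hj
    have hne : i ≠ j := fun e => by rw [e, hj] at hi; exact absurd hi (by simp)
    rcases lt_or_gt_of_ne hne with h | h
    · exfalso
      rcases lt_or_gt_of_ne (fun e => hne (α.1.injective e)) with hv | hv
      · exact h2 ⟨i, j, h, hv, hi, hj⟩
      · exact h1 ⟨i, j, h, hv, hi, hj⟩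
    · exact h
  · rintro h
    constructor
    · rintro ⟨i, j, hij, _, hi, hj⟩; exact absurd (h i j hi hj) (lt_asymm hij)
    · rintro ⟨i, j, hij, _, hi, hj⟩; exact absurd (h i j hi hj) (lt_asymm hij)

lemma classC_iff {n : ℕ} (α : SignedPerm n) :
    AvoidsAll {p12, p12b} α ↔ ∀ i j : Fin n, i < j → α.2 i = false → α.1 j < α.1 i := by
  rw [avoids_pair_iff]
  show ¬ SPContains α (Equiv.refl (Fin 2), ![false, false]) ∧
       ¬ SPContains α (Equiv.refl (Fin 2), ![false, true]) ↔ _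
  rw [contains_inc, contains_inc]
  constructor
  · rintro ⟨h1, h2⟩ i j hij hi
    rw [← perm_lt_flip α.1 (ne_of_lt hij)]
    intro hv
    cases hj : α.2 j
    · exact h1 ⟨i, j, hij, hv, hi, hj⟩
    · exact h2 ⟨i, j, hij, hv, hi, hj⟩
  · rintro h
    constructor
    · rintro ⟨i, j, hij, hv, hi, _⟩; exact absurd (h i j hij hi) (lt_asymm hv)
    · rintro ⟨i, j, hij, hv, hi, _⟩; exact absurd (h i j hij hi) (lt_asymm hv)

lemma classD_iff {n : ℕ} (α : SignedPerm n) :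
    AvoidsAll {p21b, p1b2} α ↔ ∀ i j : Fin n, α.2 i = false → α.2 j = true → α.1 i < α.1 j := by
  rw [avoids_pair_iff]
  show ¬ SPContains α (Equiv.swap 0 1, ![false, true]) ∧
       ¬ SPContains α (Equiv.refl (Fin 2), ![true, false]) ↔ _
  rw [contains_inc, contains_dec]
  constructor
  · rintro ⟨h1, h2⟩ i j hi hj
    have hne : i ≠ j := fun e => by rw [e, hj] at hi; exact absurd hi (by simp)
    rcases lt_or_gt_of_ne hne with h | h
    · rw [← perm_lt_flip α.1 (ne_of_lt h).symm]
      intro hv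
      exact h1 ⟨i, j, h, hv, hi, hj⟩
    · rw [← perm_lt_flip α.1 (ne_of_lt h)]
      intro hv
      exact h2 ⟨j, i, h, hv, hj, hi⟩
  · rintro h
    constructor
    · rintro ⟨i, j, hij, hv, hi, hj⟩; exact absurd (h i j hi hj) (lt_asymm hv)
    · rintro ⟨i, j, hij, hv, hi, hj⟩; exact absurd (h j i hj hi) (lt_asymm hv)

/-! ### Counting sign vectors -/

lemma countQ (n : ℕ) :
    Nat.card {s : Fin n → Bool // ∀ i j, s i = false → s j = true → i < j} = n + 1 := by
  have e : {s : Fin n → Bool // ∀ i j, s i = false → s j = true → i < j} ≃ Fin (n + 1) := by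
    refine
      { toFun := fun s =>
          ⟨(Finset.univ.filter (fun i => s.1 i = false)).card, by
            have h := Finset.card_filter_le Finset.univ (fun i => s.1 i = false)
            simp only [Finset.card_univ, Fintype.card_fin] at h
            omega⟩
        invFun := fun k =>
          ⟨fun i => decide ((k : ℕ) ≤ (i : ℕ)), by
            intro i j hi hj
            simp only [decide_eq_false_iff_not, not_le, decide_eq_true_eq] at hi hj
            exact Fin.lt_def.mpr (lt_of_lt_of_le hi hj)⟩
        left_inv := ?_
        right_inv := ?_ }
    · rintro ⟨s, h⟩
      ext i
      set k := (Finset.univ.filter (fun i => s i = false)).card with hk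
      have hfalse : ∀ i : Fin n, s i = false → (i : ℕ) < k := by
        intro i hi
        have hsub : Finset.Iic i ⊆ Finset.univ.filter (fun j => s j = false) := by
          intro j hj
          simp only [Finset.mem_Iic] at hj
          simp only [Finset.mem_filter, Finset.mem_univ, true_and]
          cases hsj : s j
          · rfl
          · exact absurd (h i j hi hsj) (not_lt.mpr hj)
        have := Finset.card_le_card hsub
        rw [Fin.card_Iic] at this
        omega
      have htrue : ∀ i : Fin n, s i = true → k ≤ (i : ℕ) := by
        intro i hi
        have hsub : Finset.univ.filter (fun j => s j = false) ⊆ Finset.Iio i := by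
          intro j hj
          simp only [Finset.mem_filter, Finset.mem_univ, true_and] at hj
          exact Finset.mem_Iio.mpr (h j i hj hi)
        have := Finset.card_le_card hsub
        rw [Fin.card_Iio] at this
        omega
      simp only
      cases hs : s i
      · simp only [decide_eq_false_iff_not, not_le]
        exact hfalse i hs
      · simp only [decide_eq_true_eq]
        exact htrue i hs
    · intro k
      ext
      simp only
      have : (Finset.univ.filter (fun i : Fin n => (decide ((k : ℕ) ≤ (i : ℕ))) = false)).card
          = (Finset.univ.filter (fun i : Fin n => (i : ℕ) < (k : ℕ))).card := by
        congr 1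
        ext i
        simp only [Finset.mem_filter, Finset.mem_univ, true_and, decide_eq_false_iff_not,
          not_le]
      rw [this, ← Fintype.card_subtype]
      have e2 : {i : Fin n // (i : ℕ) < (k : ℕ)} ≃ Fin (k : ℕ) :=
        { toFun := fun i => ⟨i.1, i.2⟩
          invFun := fun j => ⟨⟨j.1, lt_of_lt_of_le j.2 (Nat.lt_succ_iff.mp k.isLt)⟩, j.2⟩
          left_inv := fun i => rfl
          right_inv := fun j => rfl }
      rw [Fintype.card_congr e2, Fintype.card_fin]
  rw [Nat.card_congr e, Nat.card_eq_fintype_card, Fintype.card_fin]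

lemma countA (n : ℕ) :
    Nat.card {s : Fin n → Bool // ∀ i j, s i = false → s j = false → i = j} = n + 1 := by
  have e : {s : Fin n → Bool // ∀ i j, s i = false → s j = false → i = j} ≃ Option (Fin n) := by
    refine
      { toFun := fun s =>
          if h : ∃ i, s.1 i = false then some h.choose else none
        invFun := fun o =>
          match o with
          | none => ⟨fun _ => true, fun i j hi _ => by simp at hi⟩
          | some i => ⟨fun j => decide (j ≠ i), by
              intro a b ha hb
              simp only [decide_eq_false_iff_not, not_not] at ha hb
              rw [ha, hb]⟩
        left_inv := ?_
        right_inv := ?_ }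
    · rintro ⟨s, h⟩
      by_cases hex : ∃ i, s i = false
      · simp only [hex, dif_pos]
        ext j
        have hc := hex.choose_spec
        simp only
        by_cases hj : j = hex.choose
        · simp [hj, hc]
        · cases hsj : s j
          · exact absurd (h j hex.choose hsj hc) hj
          · simp [hj]
      · simp only [hex, dif_neg]
        ext j
        simp only
        cases hsj : s j
        · exact absurd ⟨j, hsj⟩ hex
        · rfl
    · intro o
      match o with
      | none =>
        simp only
        rw [dif_neg]
        push_neg
        intro i
        simp
      | some i =>
        simp only
        split
        · rename_i h
          exact congrArg _ (not_not.mp (of_decide_eq_false h.choose_spec))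
        · rename_i h
          exact absurd ⟨i, by simp⟩ h
  rw [Nat.card_congr e, Nat.card_eq_fintype_card, Fintype.card_option, Fintype.card_fin]

/-! ### The sum over permutations of `2 ^ (number of right-to-left maxima)` -/

def RL {n : ℕ} (π : Equiv.Perm (Fin n)) (i : Fin n) : Prop := ∀ j, i < j → π j < π i

instance {n : ℕ} (π : Equiv.Perm (Fin n)) : DecidablePred (RL π) := fun i =>
  inferInstanceAs (Decidable (∀ j, i < j → π j < π i))

noncomputable def rlm {n : ℕ} (π : Equiv.Perm (Fin n)) : ℕ :=
  (Finset.univ.filter (fun i => RL π i)).card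

noncomputable def insFst {n : ℕ} : Fin (n + 1) × Equiv.Perm (Fin n) ≃ Equiv.Perm (Fin (n + 1)) := by
  apply Equiv.ofBijective
    (fun x => Equiv.ofBijective (Fin.cases x.1 (fun i => x.1.succAbove (x.2 i)))
      (by
        rcases x with ⟨p, π⟩
        rw [Fintype.bijective_iff_injective_and_card]
        refine ⟨?_, rfl⟩
        intro a b hab
        induction a using Fin.cases <;> induction b using Fin.cases <;>
          simp only [Fin.cases_zero, Fin.cases_succ] at hab
        · rfl
        · exact absurd hab.symm (Fin.succAbove_ne p _)
        · exact absurd hab (Fin.succAbove_ne p _)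
        · rw [Fin.succAbove_right_inj] at hab
          rw [π.injective hab]))
  constructor
  · rintro ⟨p, π⟩ ⟨p', π'⟩ h
    have h0 : ∀ j, (Fin.cases p (fun i => p.succAbove (π i)) : Fin (n+1) → Fin (n+1)) j
        = Fin.cases p' (fun i => p'.succAbove (π' i)) j := by
      intro j
      have := congrArg (fun e => (e : Equiv.Perm (Fin (n+1))) j) h
      simpa using this
    have hp : p = p' := by simpa using h0 0
    subst hp
    have hπ : π = π' := by
      apply Equiv.ext
      intro i
      have := h0 i.succ
      simp only [Fin.cases_succ] at this
      exact Fin.succAbove_right_inj.mp this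
    rw [hπ]
  · intro σ
    have hne : ∀ i : Fin n, σ i.succ ≠ σ 0 := fun i h =>
      absurd (σ.injective h) (Fin.succ_ne_zero i)
    have hex : ∀ i : Fin n, ∃ y : Fin n, (σ 0).succAbove y = σ i.succ := fun i =>
      Fin.exists_succAbove_eq (hne i)
    set f : Fin n → Fin n := fun i => (hex i).choose with hf
    have hfspec : ∀ i, (σ 0).succAbove (f i) = σ i.succ := fun i => (hex i).choose_spec
    have hfinj : Function.Injective f := by
      intro a b hab
      have : σ a.succ = σ b.succ := by rw [← hfspec a, ← hfspec b, hab]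
      exact Fin.succ_injective _ (σ.injective this)
    obtain ⟨π, hπ⟩ : ∃ π : Equiv.Perm (Fin n), ∀ i, π i = f i := by
      have hbij : Function.Bijective f := by
        rw [Fintype.bijective_iff_injective_and_card]; exact ⟨hfinj, rfl⟩
      exact ⟨Equiv.ofBijective f hbij, fun i => rfl⟩
    refine ⟨⟨σ 0, π⟩, ?_⟩
    ext j
    simp only [Equiv.ofBijective_apply]
    induction j using Fin.cases
    · simp
    · simp [hπ, hfspec]

lemma rl_insFst_zero {n : ℕ} (p : Fin (n + 1)) (π : Equiv.Perm (Fin n)) :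
    RL (insFst (p, π)) 0 ↔ p = Fin.last n := by
  have happ0 : insFst (p, π) 0 = p := rfl
  have happs : ∀ i : Fin n, insFst (p, π) i.succ = p.succAbove (π i) := fun i => rfl
  constructor
  · intro h
    by_contra hne
    have hlt : (p : ℕ) < n := by
      have := p.isLt
      rcases Nat.lt_or_ge (p : ℕ) n with h' | h'
      · exact h'
      · exact absurd (Fin.ext (by simp only [Fin.val_last]; omega) : p = Fin.last n) hne
    set x : Fin n := ⟨(p : ℕ), hlt⟩ with hx
    have hcast : Fin.castSucc x = p := Fin.ext rfl
    have hsucc : p.succAbove x = x.succ :=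
      Fin.succAbove_of_le_castSucc _ _ (le_of_eq hcast.symm)
    have h1 := h (π.symm x).succ (Fin.succ_pos _)
    rw [happs, happ0, Equiv.apply_symm_apply, hsucc] at h1
    have : (x.succ : ℕ) < (p : ℕ) := h1
    simp [Fin.val_succ, hx] at this
  · intro h j hj
    subst h
    induction j using Fin.cases with
    | zero => exact absurd hj (lt_irrefl _)
    | succ i =>
      rw [happs, happ0, Fin.succAbove_last]
      exact Fin.castSucc_lt_last _

lemma rl_insFst_succ {n : ℕ} (p : Fin (n + 1)) (π : Equiv.Perm (Fin n)) (i : Fin n) :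
    RL (insFst (p, π)) i.succ ↔ RL π i := by
  have happs : ∀ i : Fin n, insFst (p, π) i.succ = p.succAbove (π i) := fun i => rfl
  constructor
  · intro h k hk
    have := h k.succ (by rwa [Fin.succ_lt_succ_iff])
    rw [happs, happs] at this
    exact Fin.succAbove_lt_succAbove_iff.mp this
  · intro h j hj
    induction j using Fin.cases with
    | zero => exact absurd hj (Fin.not_lt_zero _).elim
    | succ k =>
      rw [happs, happs]
      exact Fin.succAbove_lt_succAbove_iff.mpr (h k (Fin.succ_lt_succ_iff.mp hj))

lemma rlm_insFst {n : ℕ} (p : Fin (n + 1)) (π : Equiv.Perm (Fin n)) :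
    rlm (insFst (p, π)) = rlm π + (if p = Fin.last n then 1 else 0) := by
  unfold rlm
  rw [Fin.univ_succ, Finset.filter_cons]
  by_cases hp : p = Fin.last n
  · rw [if_pos (by rw [rl_insFst_zero]; exact hp), if_pos hp, Finset.card_cons,
      Finset.filter_map, Finset.card_map]
    congr 2
    ext i
    simp only [Finset.mem_filter, Function.comp_apply, Function.Embedding.coeFn_mk,
      rl_insFst_succ]
  · rw [if_neg (by rw [rl_insFst_zero]; exact hp), if_neg hp, Finset.filter_map,
      Finset.card_map]
    simp only [Nat.add_zero]
    congr 1
    ext i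
    simp only [Finset.mem_filter, Function.comp_apply, Function.Embedding.coeFn_mk,
      rl_insFst_succ]

lemma sumRL : ∀ n : ℕ, ∑ π : Equiv.Perm (Fin n), 2 ^ rlm π = Nat.factorial (n + 1) := by
  intro n
  induction n with
  | zero =>
    have h1 : ∀ π : Equiv.Perm (Fin 0), 2 ^ rlm π = 1 := by
      intro π
      have : rlm π = 0 := by
        unfold rlm
        simp
      rw [this, pow_zero]
    rw [Finset.sum_congr rfl (fun π _ => h1 π), Finset.sum_const, smul_eq_mul, mul_one,
      Finset.card_univ, Fintype.card_perm, Fintype.card_fin]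
    rfl
  | succ n ih =>
    rw [← Equiv.sum_comp (insFst : Fin (n+1) × Equiv.Perm (Fin n) ≃ Equiv.Perm (Fin (n+1)))
      (fun π => 2 ^ rlm π)]
    rw [Fintype.sum_prod_type]
    have key : ∀ p : Fin (n+1), ∀ π : Equiv.Perm (Fin n),
        2 ^ rlm (insFst (p, π)) = (if p = Fin.last n then 2 else 1) * 2 ^ rlm π := by
      intro p π
      rw [rlm_insFst, pow_add]
      by_cases hp : p = Fin.last n <;> simp [hp, mul_comm]
    calc ∑ p : Fin (n+1), ∑ π : Equiv.Perm (Fin n), 2 ^ rlm (insFst (p, π))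
        = ∑ p : Fin (n+1),
            ((if p = Fin.last n then 2 else 1) * ∑ π : Equiv.Perm (Fin n), 2 ^ rlm π) := by
          apply Finset.sum_congr rfl
          intro p _
          rw [Finset.mul_sum]
          exact Finset.sum_congr rfl (fun π _ => key p π)
      _ = (∑ p : Fin (n+1), (if p = Fin.last n then 2 else 1)) * Nat.factorial (n + 1) := by
          rw [← Finset.sum_mul, ih]
      _ = (n + 2) * Nat.factorial (n + 1) := by
          congr 1
          have h2 : ∀ p : Fin (n+1),
              (if p = Fin.last n then 2 else 1) = 1 + (if p = Fin.last n then 1 else 0) := by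
            intro p; by_cases hp : p = Fin.last n <;> simp [hp]
          rw [Finset.sum_congr rfl (fun p _ => h2 p), Finset.sum_add_distrib,
            Finset.sum_const, Finset.sum_ite_eq' Finset.univ (Fin.last n) (fun _ => 1)]
          simp [Finset.card_univ]
      _ = Nat.factorial (n + 1 + 1) := by
          rw [Nat.factorial_succ (n+1)]

/-! ### Structure equivalences -/

def prodSub {A B : Type*} (P : B → Prop) : {x : A × B // P x.2} ≃ A × {b // P b} :=
  { toFun := fun x => (x.1.1, ⟨x.1.2, x.2⟩)
    invFun := fun y => ⟨(y.1, y.2.1), y.2.2⟩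
    left_inv := fun _ => rfl
    right_inv := fun _ => rfl }

def revE (n : ℕ) : {s : Fin n → Bool // ∀ i j, s i = false → s j = true → j < i} ≃
    {s : Fin n → Bool // ∀ i j, s i = false → s j = true → i < j} :=
  { toFun := fun s =>
      ⟨fun u => s.1 u.rev, fun u v hu hv => Fin.rev_lt_rev.mp (s.2 u.rev v.rev hu hv)⟩
    invFun := fun s =>
      ⟨fun u => s.1 u.rev, fun u v hu hv => Fin.rev_lt_rev.mp (s.2 u.rev v.rev hu hv)⟩
    left_inv := fun s => Subtype.ext (funext fun u => by simp [Fin.rev_rev])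
    right_inv := fun s => Subtype.ext (funext fun u => by simp [Fin.rev_rev]) }

def dE (n : ℕ) : {α : SignedPerm n // ∀ i j, α.2 i = false → α.2 j = true → α.1 i < α.1 j} ≃
    Equiv.Perm (Fin n) × {t : Fin n → Bool // ∀ u v, t u = false → t v = true → u < v} :=
  { toFun := fun x => (x.1.1, ⟨fun u => x.1.2 (x.1.1.symm u), fun u v hu hv => by
      have := x.2 (x.1.1.symm u) (x.1.1.symm v) hu hv
      simpa using this⟩)
    invFun := fun y => ⟨(y.1, fun i => y.2.1 (y.1 i)), fun i j hi hj => y.2.2 _ _ hi hj⟩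
    left_inv := fun x => Subtype.ext (Prod.ext rfl (funext fun i => by simp))
    right_inv := fun y => Prod.ext rfl (Subtype.ext (funext fun u => by simp)) }

lemma countC (n : ℕ) :
    Nat.card {α : SignedPerm n // ∀ i j : Fin n, i < j → α.2 i = false → α.1 j < α.1 i}
      = Nat.factorial (n + 1) := by
  have E : {α : SignedPerm n // ∀ i j : Fin n, i < j → α.2 i = false → α.1 j < α.1 i} ≃
      Σ π : Equiv.Perm (Fin n), ({i : Fin n // RL π i} → Bool) :=
    { toFun := fun x => ⟨x.1.1, fun i => x.1.2 i.1⟩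
      invFun := fun y => ⟨(y.1, fun i => if h : RL y.1 i then y.2 ⟨i, h⟩ else true), by
        intro i j hij hi
        dsimp only at hi ⊢
        by_cases hR : RL y.1 i
        · exact hR j hij
        · rw [dif_neg hR] at hi; cases hi⟩
      left_inv := by
        rintro ⟨⟨π, s⟩, h⟩
        apply Subtype.ext
        dsimp only
        refine Prod.ext rfl (funext fun i => ?_)
        show (if h : RL π i then s i else true) = s i
        by_cases hR : RL π i
        · rw [dif_pos hR]
        · rw [dif_neg hR]
          cases hs : s i
          · exact absurd (fun j hj => h i j hj hs) hR
          · rfl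
      right_inv := by
        rintro ⟨π, c⟩
        dsimp only
        exact congrArg (Sigma.mk π) (funext fun i => by rw [dif_pos i.2]) }
  rw [Nat.card_congr E, Nat.card_eq_fintype_card, Fintype.card_sigma]
  have h2 : ∀ π : Equiv.Perm (Fin n),
      Fintype.card ({i : Fin n // RL π i} → Bool) = 2 ^ rlm π := by
    intro π
    rw [Fintype.card_fun, Fintype.card_bool, Fintype.card_subtype]
    rfl
  rw [Finset.sum_congr rfl (fun π _ => h2 π), sumRL]

end SPAux

/-- b_n({12,21}) = b_n({12,12̄}) = b_n({21̄,12̄}) = b_n({21̄,1̄2}) = (n+1)!. -/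
theorem stmt0 (n : ℕ) :
    bn n {p12, p21} = Nat.factorial (n + 1) ∧
    bn n {p12, p12b} = Nat.factorial (n + 1) ∧
    bn n {p21b, p12b} = Nat.factorial (n + 1) ∧
    bn n {p21b, p1b2} = Nat.factorial (n + 1) := by
  refine ⟨?_, ?_, ?_, ?_⟩
  · show Nat.card {α : SignedPerm n // AvoidsAll {p12, p21} α} = _
    rw [Nat.card_congr ((Equiv.subtypeEquivRight (fun α => classA_iff α)).trans (prodSub (fun s : Fin n → Bool => ∀ i j : Fin n, s i = false → s j = false → i = j))),
      Nat.card_prod, Nat.card_eq_fintype_card, Fintype.card_perm, Fintype.card_fin, countA,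
      Nat.factorial_succ, Nat.mul_comm]
  · show Nat.card {α : SignedPerm n // AvoidsAll {p12, p12b} α} = _
    rw [Nat.card_congr (Equiv.subtypeEquivRight (fun α => classC_iff α)), countC]
  · show Nat.card {α : SignedPerm n // AvoidsAll {p21b, p12b} α} = _
    rw [Nat.card_congr (((Equiv.subtypeEquivRight (fun α => classB_iff α)).trans
        (prodSub (fun s : Fin n → Bool => ∀ i j : Fin n, s i = false → s j = true → j < i))).trans
        (Equiv.prodCongrRight (fun _ => revE n))),
      Nat.card_prod, Nat.card_eq_fintype_card, Fintype.card_perm, Fintype.card_fin, countQ,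
      Nat.factorial_succ, Nat.mul_comm]
  · show Nat.card {α : SignedPerm n // AvoidsAll {p21b, p1b2} α} = _
    rw [Nat.card_congr ((Equiv.subtypeEquivRight (fun α => classD_iff α)).trans (dE n)),
      Nat.card_prod, Nat.card_eq_fintype_card, Fintype.card_perm, Fintype.card_fin, countQ,
      Nat.factorial_succ, Nat.mul_comm]
end

section
/- For every natural number n ≥ 0, b_n({12, 1̄2̄}) = b_n({12, 2̄1̄}) = C(2n, n), the central binomial coefficient. -/
open Finset Function

section StrictMonoDir

variable {α β γ : Type*}

def StrictMonoDir [Preorder α] [Preorder β] : Bool → (α → β) → Prop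
  | true, f => StrictMono f
  | false, f => StrictAnti f

theorem StrictMonoDir.eq_of_range_eq [LinearOrder α] [WellFoundedLT α] [Preorder β] {up : Bool}
    {f g : α → β} (hf : StrictMonoDir up f) (hg : StrictMonoDir up g)
    (h : Set.range f = Set.range g) : f = g := by
  cases up
  · exact (StrictMono.range_inj (γ := βᵒᵈ) hf.dual_right hg.dual_right).1 h
  · exact (StrictMono.range_inj hf hg).1 h

theorem StrictMono.comp_strictMonoDir [Preorder α] [Preorder β] [Preorder γ] {g : β → γ}
    {f : α → β} {up : Bool} (hg : StrictMono g) (hf : StrictMonoDir up f) :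
    StrictMonoDir up (g ∘ f) := by
  cases up
  exacts [hg.comp_strictAnti hf, hg.comp hf]

theorem Function.Injective.strictMonoDir_iff [LinearOrder α] [LinearOrder β] {g : α → β}
    (hg : Injective g) {up : Bool} :
    StrictMonoDir up g ↔ ∀ i j, i < j → (g i < g j ↔ up = true) := by
  cases up
  · simp only [StrictMonoDir, StrictAnti, Bool.false_eq_true, iff_false, not_lt]
    exact forall₂_congr fun i j => imp_congr_right fun hij => ((hg.ne hij.ne).symm.le_iff_lt).symm
  · simp [StrictMonoDir, StrictMono]

theorem exists_equiv_strictMonoDir [LinearOrder α] [Fintype α] [LinearOrder β] [Fintype β]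
    (h : Fintype.card α = Fintype.card β) (up : Bool) :
    ∃ e : α ≃ β, StrictMonoDir up e := by
  cases up
  · let e :=
      (Fintype.orderIsoFinOfCardEq α h).symm.trans (Fintype.orderIsoFinOfCardEq βᵒᵈ rfl)
    exact ⟨e.toEquiv, e.strictMono⟩
  · let e := (Fintype.orderIsoFinOfCardEq α h).symm.trans (Fintype.orderIsoFinOfCardEq β rfl)
    exact ⟨e.toEquiv, e.strictMono⟩

end StrictMonoDir

section FiberwisePerm

variable {α γ : Type*} {c c' : α → γ}

theorem range_perm_restrict_fiber {σ : Equiv.Perm α} (hσ : c' ∘ σ = c) (b : γ) :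
    Set.range (fun x : {x // c x = b} => σ x) = {y | c' y = b} := by
  ext y
  constructor
  · rintro ⟨⟨x, rfl⟩, rfl⟩
    exact congrFun hσ x
  · intro hy
    refine ⟨⟨σ.symm y, ?_⟩, σ.apply_symm_apply y⟩
    rw [← hσ, comp_apply, σ.apply_symm_apply]
    exact hy

theorem exists_perm_comp_eq_strictMonoDir [LinearOrder α] [Fintype α] [DecidableEq γ]
    (h : ∀ b, Fintype.card {x // c x = b} = Fintype.card {x // c' x = b}) (up : γ → Bool) :
    ∃ σ : Equiv.Perm α, c' ∘ σ = c ∧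
      ∀ b, StrictMonoDir (up b) (fun x : {x // c x = b} => σ x) := by
  choose e he using fun b => exists_equiv_strictMonoDir (h b) (up b)
  let σ : Equiv.Perm α := (Equiv.sigmaFiberEquiv c).symm.trans
    ((Equiv.sigmaCongrRight e).trans (Equiv.sigmaFiberEquiv c'))
  have hσ : ∀ b (x : {x // c x = b}), σ x = e b x := by
    rintro b ⟨x, rfl⟩
    rfl
  refine ⟨σ, funext fun x => (e (c x) ⟨x, rfl⟩).2, fun b => ?_⟩
  rw [show (fun x : {x // c x = b} => σ x) = Subtype.val ∘ e b from funext (hσ b)]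
  exact Subtype.strictMono_coe _ |>.comp_strictMonoDir (he b)

theorem perm_eq_of_comp_eq_strictMonoDir [LinearOrder α] [WellFoundedLT α] {up : γ → Bool}
    {σ τ : Equiv.Perm α} (hσ : c' ∘ σ = c) (hτ : c' ∘ τ = c)
    (hσm : ∀ b, StrictMonoDir (up b) (fun x : {x // c x = b} => σ x))
    (hτm : ∀ b, StrictMonoDir (up b) (fun x : {x // c x = b} => τ x)) : σ = τ := by
  ext x
  have h := (hσm (c x)).eq_of_range_eq (hτm (c x))
    ((range_perm_restrict_fiber hσ _).trans (range_perm_restrict_fiber hτ _).symm)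
  exact congrFun h ⟨x, rfl⟩

end FiberwisePerm

section Counting

variable (X : Type*) [Fintype X]

theorem card_finset_pairs_card_eq :
    Fintype.card {p : Finset X × Finset X // #p.1 = #p.2} =
      (2 * Fintype.card X).choose (Fintype.card X) := by
  have fiber (A : Finset X) :
      Fintype.card {B : Finset X // #A = #B} = (Fintype.card X).choose #A := by
    simp_rw [eq_comm (a := #A), Fintype.card_finset_len]
  rw [Fintype.card_congr (Equiv.subtypeProdEquivSigmaSubtype fun A B : Finset X => #A = #B),
    Fintype.card_sigma]
  simp_rw [fiber, ← powerset_univ, sum_powerset_apply_card fun k => (Fintype.card X).choose k,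
    card_univ, smul_eq_mul, ← sq]
  exact Nat.sum_range_choose_sq _

def boolFunEquivFinset [DecidableEq X] : (X → Bool) ≃ Finset X where
  toFun c := {x | c x}
  invFun s x := decide (x ∈ s)
  left_inv c := by ext; simp
  right_inv s := by ext; simp

theorem card_boolFun_pairs_fiber_card_eq [DecidableEq X] :
    Fintype.card {c : (X → Bool) × (X → Bool) //
      ∀ b, Fintype.card {x // c.1 x = b} = Fintype.card {x // c.2 x = b}} =
      (2 * Fintype.card X).choose (Fintype.card X) := by
  have card_true (c : X → Bool) : Fintype.card {x // c x = true} = #(boolFunEquivFinset X c) :=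
    Fintype.card_subtype _
  have card_false (c : X → Bool) :
      Fintype.card {x // c x = false} = Fintype.card X - Fintype.card {x // c x = true} := by
    simp_rw [← Bool.not_eq_true]
    exact Fintype.card_subtype_compl _
  rw [← card_finset_pairs_card_eq]
  refine Fintype.card_congr
    (((boolFunEquivFinset X).prodCongr (boolFunEquivFinset X)).subtypeEquiv fun c => ?_)
  simp only [Bool.forall_bool, card_false, Equiv.prodCongr_apply, Prod.map, ← card_true]
  exact and_iff_right_of_imp fun h => by rw [h]

end Counting

namespace SignedPerm

variable {n : ℕ}

theorem spContains_two_iff (α : SignedPerm n) (τ : SignedPerm 2) :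
    SPContains α τ ↔ ∃ i j, i < j ∧ α.2 i = τ.2 0 ∧ α.2 j = τ.2 1 ∧
      (α.1 i < α.1 j ↔ τ.1 0 < τ.1 1) := by
  constructor
  · rintro ⟨f, hf, hlt, hsgn⟩
    exact ⟨f 0, f 1, hf Fin.zero_lt_one, hsgn 0, hsgn 1, (hlt 0 1).symm⟩
  · rintro ⟨i, j, hij, hi, hj, hlt⟩
    have hα := α.1.injective.ne hij.ne
    have hτ := τ.1.injective.ne Fin.zero_ne_one
    refine ⟨![i, j], fun p q hpq => ?_, fun p q => ?_, fun p => ?_⟩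
    · fin_cases p <;> fin_cases q <;> simp_all
    · fin_cases p <;> fin_cases q <;> simp <;> grind
    · fin_cases p <;> simp [hi, hj]

theorem not_spContains_iff_strictMonoDir (α : SignedPerm n) (π : Equiv.Perm (Fin 2)) (b : Bool) :
    ¬ SPContains α (π, ![b, b]) ↔
      StrictMonoDir (!decide (π 0 < π 1)) (fun i : {i // α.2 i = b} => α.1 i) := by
  rw [spContains_two_iff,
    Injective.strictMonoDir_iff (g := fun i : {i // α.2 i = b} => α.1 i)
      (α.1.injective.comp Subtype.val_injective)]
  simp only [not_exists, not_and, Subtype.forall, Subtype.mk_lt_mk, Bool.not_eq_eq_eq_not,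
    Bool.not_true, decide_eq_false_iff_not, Matrix.cons_val_zero, Matrix.cons_val_one]
  exact ⟨fun h i hi j hj hij => by have := h i j hij hi hj; tauto,
    fun h i j hij hi hj => by have := h i hi j hj hij; tauto⟩

def IsClasswiseMonotone (up : Bool → Bool) (α : SignedPerm n) : Prop :=
  ∀ b, StrictMonoDir (up b) (fun i : {i // α.2 i = b} => α.1 i)

theorem avoidsAll_p12_p1b2b_iff (α : SignedPerm n) :
    AvoidsAll {p12, p1b2b} α ↔ IsClasswiseMonotone (fun _ => false) α := by
  simp [AvoidsAll, IsClasswiseMonotone, Bool.forall_bool, p12, p1b2b,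
    not_spContains_iff_strictMonoDir]

theorem avoidsAll_p12_p2b1b_iff (α : SignedPerm n) :
    AvoidsAll {p12, p2b1b} α ↔ IsClasswiseMonotone id α := by
  simp [AvoidsAll, IsClasswiseMonotone, Bool.forall_bool, p12, p2b1b,
    not_spContains_iff_strictMonoDir]

def toSignColorings {up : Bool → Bool} (α : {α : SignedPerm n // IsClasswiseMonotone up α}) :
    {c : (Fin n → Bool) × (Fin n → Bool) //
      ∀ b, Fintype.card {x // c.1 x = b} = Fintype.card {x // c.2 x = b}} :=
  ⟨(α.1.2, α.1.2 ∘ α.1.1.symm),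
    fun _ => Fintype.card_congr (α.1.1.subtypeEquiv fun _ => by simp)⟩

theorem toSignColorings_bijective (up : Bool → Bool) :
    Bijective (toSignColorings (n := n) (up := up)) := by
  constructor
  · rintro ⟨⟨σ, c⟩, hσ⟩ ⟨⟨τ, c'⟩, hτ⟩ h
    simp only [toSignColorings, Subtype.mk.injEq, Prod.mk.injEq] at h
    obtain ⟨rfl, h⟩ := h
    obtain rfl : σ = τ := perm_eq_of_comp_eq_strictMonoDir (c' := c ∘ σ.symm) (by ext; simp)
      (by rw [h]; ext; simp) hσ hτ
    rfl
  · rintro ⟨⟨c, c'⟩, hc⟩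
    obtain ⟨σ, hσc, hσ⟩ := exists_perm_comp_eq_strictMonoDir hc up
    refine ⟨⟨(σ, c), hσ⟩, ?_⟩
    simp only at hσc
    simp [toSignColorings, ← hσc, comp_assoc]

theorem card_isClasswiseMonotone (up : Bool → Bool) :
    Nat.card {α : SignedPerm n // IsClasswiseMonotone up α} = (2 * n).choose n := by
  rw [Nat.card_eq_of_bijective _ (toSignColorings_bijective up), Nat.card_eq_fintype_card,
    card_boolFun_pairs_fiber_card_eq, Fintype.card_fin]

end SignedPerm

/-- b_n({12,1̄2̄}) = b_n({12,2̄1̄}) = C(2n,n). -/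
theorem stmt1 (n : ℕ) :
    bn n {p12, p1b2b} = Nat.choose (2 * n) n ∧
    bn n {p12, p2b1b} = Nat.choose (2 * n) n := by
  refine ⟨?_, ?_⟩
  · rw [bn, ← SignedPerm.card_isClasswiseMonotone (fun _ => false)]
    exact Nat.card_congr (Equiv.subtypeEquivRight SignedPerm.avoidsAll_p12_p1b2b_iff)
  · rw [bn, ← SignedPerm.card_isClasswiseMonotone id]
    exact Nat.card_congr (Equiv.subtypeEquivRight SignedPerm.avoidsAll_p12_p2b1b_iff)
end

section
/- For every natural number n ≥ 0, b_n({12, 2̄1}) = n! + n!·Σ_{i=1}^{n} ( (1/i)·Σ_{j=0}^{i-1} 1/j! ). -/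
lemma Nat.card_subtype_eq_card_and_true_add_card_and_false {α : Type*} [Finite α]
    (p : α → Prop) (f : α → Bool) :
    Nat.card {a // p a} = Nat.card {a // p a ∧ f a = true} + Nat.card {a // p a ∧ f a = false} := by
  classical
  rw [← Nat.card_congr (Equiv.subtypeSubtypeEquivSubtypeInter p (f · = true)),
    ← Nat.card_congr (Equiv.subtypeSubtypeEquivSubtypeInter p (f · = false)), ← Nat.card_sum,
    ← Nat.card_congr (Equiv.sumCompl fun a : {a // p a} => f a = true)]
  simp only [Bool.not_eq_true]

lemma Function.Injective.lt_swap_iff_not_lt {ι β : Type*} [LinearOrder β] {e : ι → β}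
    (he : Function.Injective e) {i j : ι} (hij : i ≠ j) : e j < e i ↔ ¬ e i < e j := by
  rw [not_lt, (he.ne hij.symm).le_iff_lt]

namespace SignedPerm

open scoped Nat

def BarredIffBelowUnbarred {n : ℕ} (α : SignedPerm n) : Prop :=
  ∀ i j : Fin n, i < j → α.2 j = false → (α.2 i = true ↔ α.1 i < α.1 j)

lemma spContains_pair_iff {n : ℕ} (α : SignedPerm n) (τ : SignedPerm 2) :
    SPContains α τ ↔ ∃ i j : Fin n, i < j ∧ (τ.1 0 < τ.1 1 ↔ α.1 i < α.1 j) ∧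
      α.2 i = τ.2 0 ∧ α.2 j = τ.2 1 := by
  constructor
  · rintro ⟨f, hf, hord, hsgn⟩
    exact ⟨f 0, f 1, hf Fin.zero_lt_one, hord 0 1, hsgn 0, hsgn 1⟩
  · rintro ⟨i, j, hij, hord, hi, hj⟩
    refine ⟨![i, j], by simpa [strictMono_vecCons] using hij, fun p q => ?_, fun p => ?_⟩
    · have hswap := τ.1.injective.lt_swap_iff_not_lt Fin.zero_ne_one
      have hswap' := α.1.injective.lt_swap_iff_not_lt hij.ne
      fin_cases p <;> fin_cases q <;> simp [hord, hswap, hswap']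
    · fin_cases p <;> simpa

lemma avoidsAll_p12_p2b1_iff {n : ℕ} (α : SignedPerm n) :
    AvoidsAll {p12, p2b1} α ↔ BarredIffBelowUnbarred α := by
  simp only [AvoidsAll, Set.forall_mem_insert, Set.mem_singleton_iff, forall_eq,
    spContains_pair_iff, p12, p2b1, BarredIffBelowUnbarred, Equiv.refl_apply,
    Equiv.swap_apply_left, Equiv.swap_apply_right, Matrix.cons_val_zero, Matrix.cons_val_one,
    Fin.zero_lt_one, Fin.not_lt_zero, true_iff, false_iff, not_lt, not_exists, not_and,
    Bool.not_eq_false]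
  refine ⟨fun ⟨h12, h2b1⟩ i j hij hj => ?_,
    fun h => ⟨fun i j hij hlt hi => ?_, fun i j hij hle hi => ?_⟩⟩
  · cases hi : α.2 i
    · simpa [hj] using mt (h12 i j hij · hi)
    · simpa [hj] using mt (h2b1 i j hij · hi)
  · by_contra! hj
    simpa [hi, hlt] using h i j hij (Bool.eq_false_iff.mpr hj)
  · by_contra! hj
    exact absurd ((h i j hij (Bool.eq_false_iff.mpr hj)).1 hi) (not_lt.mpr hle)

section InsertErase

variable {n : ℕ}

-- `insertAt x v b β` places an entry of absolute value `v` and sign `b` at position `x`,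
-- renumbering the entries of `β` around it; `eraseAt x` is the inverse operation.
def insertAt (x v : Fin (n + 1)) (b : Bool) (β : SignedPerm n) : SignedPerm (n + 1) :=
  ((finSuccEquiv' x).trans (β.1.optionCongr.trans (finSuccEquiv' v).symm),
    fun i => (finSuccEquiv' x i).elim b β.2)

def eraseAt (x : Fin (n + 1)) (α : SignedPerm (n + 1)) : SignedPerm n :=
  (Equiv.removeNone
      ((finSuccEquiv' x).symm.trans (α.1.trans (finSuccEquiv' (α.1 x)))),
    fun i => α.2 (x.succAbove i))

@[simp] lemma insertAt_fst_self (x v : Fin (n + 1)) (b : Bool) (β : SignedPerm n) :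
    (insertAt x v b β).1 x = v := by
  simp [insertAt]

@[simp] lemma insertAt_fst_succAbove (x v : Fin (n + 1)) (b : Bool) (β : SignedPerm n)
    (i : Fin n) : (insertAt x v b β).1 (x.succAbove i) = v.succAbove (β.1 i) := by
  simp [insertAt]

@[simp] lemma insertAt_snd_self (x v : Fin (n + 1)) (b : Bool) (β : SignedPerm n) :
    (insertAt x v b β).2 x = b := by
  simp [insertAt]

@[simp] lemma insertAt_snd_succAbove (x v : Fin (n + 1)) (b : Bool) (β : SignedPerm n)
    (i : Fin n) : (insertAt x v b β).2 (x.succAbove i) = β.2 i := by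
  simp [insertAt]

@[simp] lemma eraseAt_snd (x : Fin (n + 1)) (α : SignedPerm (n + 1)) (i : Fin n) :
    (eraseAt x α).2 i = α.2 (x.succAbove i) := rfl

lemma succAbove_eraseAt_fst (x : Fin (n + 1)) (α : SignedPerm (n + 1)) (i : Fin n) :
    (α.1 x).succAbove ((eraseAt x α).1 i) = α.1 (x.succAbove i) := by
  obtain ⟨j, hj⟩ := Fin.exists_succAbove_eq (α.1.injective.ne (x.succAbove_ne i))
  have hsome : ((finSuccEquiv' x).symm.trans (α.1.trans (finSuccEquiv' (α.1 x))))
      (some i) = some j := by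
    simp [← hj]
  have hj' : (eraseAt x α).1 i = j := by
    simpa [eraseAt, hsome] using Equiv.removeNone_some _ ⟨j, hsome⟩
  rw [hj', hj]

lemma eraseAt_fst_lt_iff (x : Fin (n + 1)) (α : SignedPerm (n + 1)) (i j : Fin n) :
    (eraseAt x α).1 i < (eraseAt x α).1 j ↔ α.1 (x.succAbove i) < α.1 (x.succAbove j) := by
  rw [← succAbove_eraseAt_fst, ← succAbove_eraseAt_fst, Fin.succAbove_lt_succAbove_iff]

@[simp] lemma insertAt_fst_symm_apply (x v : Fin (n + 1)) (b : Bool) (β : SignedPerm n) :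
    (insertAt x v b β).1.symm v = x := by
  rw [Equiv.symm_apply_eq, insertAt_fst_self]

lemma insertAt_eraseAt {x v : Fin (n + 1)} {b : Bool} {α : SignedPerm (n + 1)}
    (hv : α.1 x = v) (hb : α.2 x = b) : insertAt x v b (eraseAt x α) = α := by
  subst hv hb
  refine Prod.ext (Equiv.ext fun p => ?_) (funext fun p => ?_) <;>
    rcases eq_or_ne p x with rfl | hp
  all_goals first
    | simp
    | obtain ⟨i, rfl⟩ := Fin.exists_succAbove_eq hp; simp [succAbove_eraseAt_fst]

lemma eraseAt_insertAt (x v : Fin (n + 1)) (b : Bool) (β : SignedPerm n) :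
    eraseAt x (insertAt x v b β) = β := by
  refine Prod.ext (Equiv.ext fun i => ?_) (funext fun i => by simp)
  have h := succAbove_eraseAt_fst x (insertAt x v b β) i
  rw [insertAt_fst_self, insertAt_fst_succAbove] at h
  exact Fin.succAbove_right_injective h

end InsertErase

section Preservation

variable {n : ℕ}

lemma BarredIffBelowUnbarred.eraseAt {α : SignedPerm (n + 1)} (h : BarredIffBelowUnbarred α)
    (x : Fin (n + 1)) : BarredIffBelowUnbarred (eraseAt x α) := by
  intro i j hij hj
  rw [eraseAt_fst_lt_iff, eraseAt_snd]
  exact h _ _ (Fin.strictMono_succAbove x hij) hj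

lemma barredIffBelowUnbarred_insertAt_true {x v : Fin (n + 1)} {β : SignedPerm n}
    (hβ : BarredIffBelowUnbarred β)
    (hv : ∀ j, x < x.succAbove j → β.2 j = false → v < v.succAbove (β.1 j)) :
    BarredIffBelowUnbarred (insertAt x v true β) := by
  intro i j hij hj
  obtain ⟨j, rfl⟩ : ∃ j', x.succAbove j' = j :=
    Fin.exists_succAbove_eq (by rintro rfl; simp at hj)
  rw [insertAt_snd_succAbove] at hj
  rcases eq_or_ne i x with rfl | hi
  · simpa using hv j hij hj
  · obtain ⟨i, rfl⟩ := Fin.exists_succAbove_eq hi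
    simpa using hβ i j (Fin.succAbove_lt_succAbove_iff.mp hij) hj

lemma barredIffBelowUnbarred_insertAt_last_true (v : Fin (n + 1)) {β : SignedPerm n}
    (hβ : BarredIffBelowUnbarred β) :
    BarredIffBelowUnbarred (insertAt (Fin.last n) v true β) :=
  barredIffBelowUnbarred_insertAt_true hβ fun j hj =>
    absurd hj (by simpa using (Fin.castSucc_lt_last j).le)

lemma barredIffBelowUnbarred_insertAt_zero_true (x : Fin (n + 1)) {β : SignedPerm n}
    (hβ : BarredIffBelowUnbarred β) :
    BarredIffBelowUnbarred (insertAt x 0 true β) :=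
  barredIffBelowUnbarred_insertAt_true hβ fun j _ _ => by simp

end Preservation

lemma barredIffBelowUnbarred_revPerm (n : ℕ) :
    BarredIffBelowUnbarred ((Fin.revPerm, fun _ => false) : SignedPerm n) :=
  fun _ _ hij _ => by simpa using hij.le

lemma eq_revPerm_of_barredIffBelowUnbarred {m : ℕ} {α : SignedPerm (m + 1)}
    (h : BarredIffBelowUnbarred α) (hlast : α.2 (Fin.last m) = false)
    (hzero : α.2 (α.1.symm 0) = false) : α = (Fin.revPerm, fun _ => false) := by
  have hlast_zero : α.1 (Fin.last m) = 0 := by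
    rcases (Fin.le_last (α.1.symm 0)).lt_or_eq with hlt | heq
    · simpa [hzero, Fin.pos_iff_ne_zero] using h _ _ hlt hlast
    · rw [← heq, Equiv.apply_symm_apply]
  have hunbarred : ∀ i, α.2 i = false := by
    intro i
    rcases (Fin.le_last i).lt_or_eq with hlt | rfl
    · simpa [hlast_zero] using h _ _ hlt hlast
    · exact hlast
  have hanti : StrictAnti α.1 := by
    refine Antitone.strictAnti_of_injective (fun i j hij => ?_) α.1.injective
    rcases hij.lt_or_eq with hlt | rfl
    · simpa [hunbarred] using h _ _ hlt (hunbarred j)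
    · exact le_rfl
  have hrev : Fin.rev ∘ α.1 = id := (Fin.rev_strictAnti.comp hanti).eq_id
  refine Prod.ext (Equiv.ext fun i => ?_) (funext hunbarred)
  simpa [← Fin.rev_eq_iff] using congrFun hrev i

def barredLastEquiv (n : ℕ) :
    {α : SignedPerm (n + 1) // BarredIffBelowUnbarred α ∧ α.2 (Fin.last n) = true} ≃
      Fin (n + 1) × {β : SignedPerm n // BarredIffBelowUnbarred β} where
  toFun α := (α.1.1 (Fin.last n), ⟨eraseAt (Fin.last n) α.1, α.2.1.eraseAt _⟩)
  invFun vβ := ⟨insertAt (Fin.last n) vβ.1 true vβ.2.1,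
    barredIffBelowUnbarred_insertAt_last_true vβ.1 vβ.2.2, insertAt_snd_self ..⟩
  left_inv := by
    rintro ⟨α, -, hlast⟩
    exact Subtype.ext (insertAt_eraseAt rfl hlast)
  right_inv := by
    rintro ⟨v, β, -⟩
    ext1
    · exact insertAt_fst_self ..
    · exact Subtype.ext (eraseAt_insertAt ..)

def unbarredLastBarredMinEquiv (n : ℕ) :
    {α : SignedPerm (n + 2) // (BarredIffBelowUnbarred α ∧ α.2 (Fin.last (n + 1)) = false) ∧
        α.2 (α.1.symm 0) = true} ≃
      Fin (n + 1) ×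
        {β : SignedPerm (n + 1) // BarredIffBelowUnbarred β ∧ β.2 (Fin.last n) = false} where
  toFun α :=
    have hx : α.1.1.symm 0 ≠ Fin.last (n + 1) := fun h => by
      simpa [h, α.2.1.2] using α.2.2
    ((α.1.1.symm 0).castPred hx, ⟨eraseAt _ α.1, α.2.1.1.eraseAt _, by
      rw [eraseAt_snd, Fin.succAbove_ne_last_last hx]; exact α.2.1.2⟩)
  invFun pβ := ⟨insertAt pβ.1.castSucc 0 true pβ.2.1,
    ⟨barredIffBelowUnbarred_insertAt_zero_true _ pβ.2.2.1, by
      rw [← Fin.succAbove_ne_last_last (Fin.castSucc_lt_last pβ.1).ne, insertAt_snd_succAbove]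
      exact pβ.2.2.2⟩, by simp⟩
  left_inv := by
    rintro ⟨α, -, hzero⟩
    exact Subtype.ext (insertAt_eraseAt (by simp) hzero)
  right_inv := by
    rintro ⟨p, β, -⟩
    ext1
    · simp
    · exact Subtype.ext (by simpa using eraseAt_insertAt ..)

lemma card_unbarredLast_unbarredMin (m : ℕ) :
    Nat.card {α : SignedPerm (m + 1) //
      (BarredIffBelowUnbarred α ∧ α.2 (Fin.last m) = false) ∧ α.2 (α.1.symm 0) = false} = 1 :=
  Nat.card_eq_one_iff_exists.mpr
    ⟨⟨(Fin.revPerm, fun _ => false), ⟨barredIffBelowUnbarred_revPerm _, rfl⟩, rfl⟩,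
      fun ⟨_, ⟨h, hlast⟩, hzero⟩ =>
        Subtype.ext (eq_revPerm_of_barredIffBelowUnbarred h hlast hzero)⟩

lemma card_unbarredLast_zero :
    Nat.card {α : SignedPerm 1 // BarredIffBelowUnbarred α ∧ α.2 (Fin.last 0) = false} = 1 := by
  have : IsEmpty {α : SignedPerm 1 //
      (BarredIffBelowUnbarred α ∧ α.2 (Fin.last 0) = false) ∧ α.2 (α.1.symm 0) = true} :=
    ⟨fun ⟨α, ⟨_, hlast⟩, hzero⟩ => by
      rw [Subsingleton.elim (α.1.symm 0) (Fin.last 0), hlast] at hzero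
      exact Bool.false_ne_true hzero⟩
  rw [Nat.card_subtype_eq_card_and_true_add_card_and_false _ fun α => α.2 (α.1.symm 0),
    card_unbarredLast_unbarredMin, Nat.card_of_isEmpty]

lemma card_unbarredLast_succ (n : ℕ) :
    Nat.card {α : SignedPerm (n + 2) //
        BarredIffBelowUnbarred α ∧ α.2 (Fin.last (n + 1)) = false} =
      (n + 1) * Nat.card {β : SignedPerm (n + 1) //
        BarredIffBelowUnbarred β ∧ β.2 (Fin.last n) = false} + 1 := by
  rw [Nat.card_subtype_eq_card_and_true_add_card_and_false _ fun α => α.2 (α.1.symm 0),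
    card_unbarredLast_unbarredMin, Nat.card_congr (unbarredLastBarredMinEquiv n), Nat.card_prod,
    Nat.card_fin]

lemma card_barredIffBelowUnbarred_zero :
    Nat.card {α : SignedPerm 0 // BarredIffBelowUnbarred α} = 1 :=
  Nat.card_eq_one_iff_exists.mpr ⟨⟨(1, finZeroElim), fun i => i.elim0⟩,
    fun _ => Subsingleton.elim _ _⟩

lemma card_barredIffBelowUnbarred_succ (n : ℕ) :
    Nat.card {α : SignedPerm (n + 1) // BarredIffBelowUnbarred α} =
      (n + 1) * Nat.card {β : SignedPerm n // BarredIffBelowUnbarred β} +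
        Nat.card {α : SignedPerm (n + 1) //
          BarredIffBelowUnbarred α ∧ α.2 (Fin.last n) = false} := by
  rw [Nat.card_subtype_eq_card_and_true_add_card_and_false _ fun α => α.2 (Fin.last n),
    Nat.card_congr (barredLastEquiv n), Nat.card_prod, Nat.card_fin]

lemma card_unbarredLast_eq (n : ℕ) :
    (Nat.card {α : SignedPerm (n + 1) //
        BarredIffBelowUnbarred α ∧ α.2 (Fin.last n) = false} : ℚ) =
      n ! * ∑ j ∈ Finset.range (n + 1), 1 / (j ! : ℚ) := by
  induction n with
  | zero => rw [card_unbarredLast_zero]; simp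
  | succ n ih =>
    rw [card_unbarredLast_succ, Finset.sum_range_succ _ (n + 1), Nat.factorial_succ]
    push_cast
    rw [ih]
    field_simp

lemma card_barredIffBelowUnbarred_eq (n : ℕ) :
    (Nat.card {α : SignedPerm n // BarredIffBelowUnbarred α} : ℚ) =
      n ! + n ! * ∑ i ∈ Finset.Icc 1 n, (1 / (i : ℚ)) * ∑ j ∈ Finset.range i, 1 / (j ! : ℚ) := by
  induction n with
  | zero => simp [card_barredIffBelowUnbarred_zero]
  | succ n ih =>
    rw [card_barredIffBelowUnbarred_succ, Finset.sum_Icc_succ_top (Nat.le_add_left 1 n),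
      Nat.factorial_succ]
    push_cast
    rw [ih, card_unbarredLast_eq]
    field_simp
    ring

end SignedPerm

/-- b_n({12,2̄1}) = n! + n!·Σ_{i=1}^n (1/i)·Σ_{j=0}^{i-1} 1/j!. -/
theorem stmt2 (n : ℕ) :
    (bn n {p12, p2b1} : ℚ) =
      (Nat.factorial n : ℚ) +
        (Nat.factorial n : ℚ) *
          ∑ i ∈ Finset.Icc 1 n,
            (1 / (i : ℚ)) * ∑ j ∈ Finset.range i, 1 / (Nat.factorial j : ℚ) := by
  rw [bn, Nat.card_congr (Equiv.subtypeEquivRight SignedPerm.avoidsAll_p12_p2b1_iff)]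
  exact SignedPerm.card_barredIffBelowUnbarred_eq n
end

section
/- For every natural number n ≥ 1, b_n({12̄, 1̄2}) = 2·Σ_{l=1}^{n} Σ ∏_{j=1}^{l} i_j!, where the inner sum runs over all compositions (i_1, i_2, …, i_l) of n into l positive parts (i.e. i_1 + i_2 + … + i_l = n with each i_j ≥ 1). -/
/-!
Avoiding `12̄` and `1̄2` says exactly that whenever two positions carry different signs, the
later one has the smaller absolute value. Cut the sign word into its maximal constant runs: these
form a composition `c` of `n`, and the sign word is recovered from `c` and its first sign.
Adjacent runs have opposite signs, so every absolute value in a run exceeds every absolute value in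
any later run (for runs of equal sign, compare both with the run right after the first one).
Hence the runs receive consecutive blocks of values, from the largest down, and only the order
inside each run is free, which gives `∏ (block size)!` permutations for each of the two
possible first signs.
-/

open Equiv Finset

namespace Composition

variable {n : ℕ} (c : Composition n)

theorem index_monotone : Monotone c.index := by
  intro i j hij
  by_contra! h
  have h1 : c.sizeUpTo (c.index j + 1) ≤ c.sizeUpTo (c.index i) := c.monotone_sizeUpTo h
  have h2 := c.sizeUpTo_index_le i
  have h3 := c.lt_sizeUpTo_index_succ j
  rw [Fin.val_succ] at h3
  have : (i : ℕ) ≤ j := hij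
  omega

theorem index_surjective : Function.Surjective c.index :=
  fun i => ⟨c.embedding i ⟨0, c.one_le_blocksFun i⟩, c.index_embedding _ _⟩

theorem index_succ {k : ℕ} (hk : k + 1 < n) :
    (c.index ⟨k + 1, hk⟩ : ℕ) = c.index ⟨k, by omega⟩ ∨
      (c.index ⟨k + 1, hk⟩ : ℕ) = c.index ⟨k, by omega⟩ + 1 := by
  have hle : c.index ⟨k, by omega⟩ ≤ c.index ⟨k + 1, hk⟩ :=
    c.index_monotone (Fin.mk_le_mk.2 k.le_succ)
  suffices (c.index ⟨k + 1, hk⟩ : ℕ) ≤ c.index ⟨k, by omega⟩ + 1 by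
    rw [Fin.le_def] at hle
    omega
  by_contra! h
  obtain ⟨y, hy⟩ := c.index_surjective
    ⟨(c.index ⟨k, by omega⟩ : ℕ) + 1, h.trans (c.index ⟨k + 1, hk⟩).isLt⟩
  have hky : (⟨k, by omega⟩ : Fin n) < y :=
    c.index_monotone.reflect_lt (by simp [hy, Fin.lt_def])
  have hyk : y < ⟨k + 1, hk⟩ :=
    c.index_monotone.reflect_lt (by simpa [hy, Fin.lt_def] using h)
  rw [Fin.lt_def] at hky hyk
  exact absurd hyk (by simpa using hky)

theorem index_zero (hn : 0 < n) : (c.index ⟨0, hn⟩ : ℕ) = 0 := by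
  obtain ⟨y, hy⟩ := c.index_surjective ⟨0, c.length_pos_of_pos hn⟩
  have := c.index_monotone (Fin.mk_le_of_le_val (Nat.zero_le y) : (⟨0, hn⟩ : Fin n) ≤ y)
  rw [hy, Fin.le_def] at this
  exact Nat.le_zero.1 this

theorem card_index_eq (i : Fin c.length) :
    Nat.card {x : Fin n // c.index x = i} = c.blocksFun i := by
  rw [← Nat.card_fin (c.blocksFun i)]
  exact Nat.card_congr
    ((subtypeEquivRight fun x => by rw [c.mem_range_embedding_iff', eq_comm]).trans
      (ofInjective _ (c.embedding i).injective).symm)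

theorem image_index_val : univ.image (fun x => (c.index x : ℕ)) = range c.length := by
  ext m
  simp only [mem_image, mem_univ, true_and, mem_range]
  exact ⟨fun ⟨x, hx⟩ => hx ▸ (c.index x).isLt,
    fun hm => (c.index_surjective ⟨m, hm⟩).imp fun x hx => by rw [hx]⟩

theorem ext_of_index_val {c c' : Composition n}
    (h : ∀ x, (c.index x : ℕ) = c'.index x) : c = c' := by
  have hlen : c.length = c'.length := by
    rw [← card_range c.length, ← card_range c'.length, ← image_index_val, ← image_index_val]
    simp only [h]
  ext1
  refine List.ext_getElem (by simp [hlen]) fun m hm hm' => ?_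
  have key : ∀ (d : Composition n) (hd : m < d.length),
      d.blocks[m]'(by simpa using hd) = Nat.card {x : Fin n // (d.index x : ℕ) = m} := by
    intro d hd
    rw [show d.blocks[m] = d.blocksFun ⟨m, hd⟩ from rfl, ← card_index_eq]
    exact Nat.card_congr (subtypeEquivRight fun x => Fin.ext_iff)
  rw [key c (by simpa using hm), key c' (by simpa using hm')]
  simp only [h]

theorem card_perm_index_comp_eq :
    Nat.card {ρ : Perm (Fin n) // c.index ∘ ρ = c.index} =
      (c.blocks.map Nat.factorial).prod := by
  classical
  rw [Nat.card_eq_fintype_card, DomMulAct.stabilizer_card, ← c.ofFn_blocksFun, List.map_ofFn,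
    List.prod_ofFn]
  refine prod_congr rfl fun i _ => ?_
  rw [Function.comp_apply, ← c.card_index_eq i, Nat.card_eq_fintype_card]

/-- The sign word with first sign `b` whose maximal constant runs are the blocks of `c`. -/
def runSigns (b : Bool) : Fin n → Bool := fun x => xor b (c.index x : ℕ).bodd

theorem runSigns_ne_runSigns_iff {b : Bool} {i j : Fin n} :
    c.runSigns b i ≠ c.runSigns b j ↔ (c.index i : ℕ).bodd ≠ (c.index j : ℕ).bodd := by
  simp [runSigns]

theorem runSigns_injective (hn : 0 < n) :
    Function.Injective fun p : Bool × Composition n => p.2.runSigns p.1 := by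
  rintro ⟨b, c⟩ ⟨b', c'⟩ h
  have hb : b = b' := by simpa [runSigns, index_zero] using congrFun h ⟨0, hn⟩
  subst hb
  have hbodd (x : Fin n) : (c.index x : ℕ).bodd = (c'.index x : ℕ).bodd := by
    simpa [runSigns] using congrFun h x
  suffices ∀ k (hk : k < n), (c.index ⟨k, hk⟩ : ℕ) = c'.index ⟨k, hk⟩ by
    rw [ext_of_index_val fun x => this x x.isLt]
  intro k
  induction k with
  | zero => intro hk; rw [index_zero, index_zero]
  | succ k ih =>
    intro hk
    -- the next index is the current one or its successor, and the parity tells which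
    have hodd := hbodd ⟨k + 1, hk⟩
    rcases c.index_succ hk with h1 | h1 <;> rcases c'.index_succ hk with h2 | h2 <;>
      rw [h1, h2, ih] at hodd ⊢ <;> simp [Nat.bodd_succ] at hodd ⊢

theorem runSigns_bijective (hn : 0 < n) :
    Function.Bijective fun p : Bool × Composition n => p.2.runSigns p.1 := by
  rw [Fintype.bijective_iff_injective_and_card]
  refine ⟨runSigns_injective hn, ?_⟩
  rw [Fintype.card_prod, Fintype.card_bool, composition_card, Fintype.card_fun,
    Fintype.card_bool, Fintype.card_fin, ← pow_succ', Nat.sub_add_cancel hn]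

end Composition

theorem Monotone.comp_perm_eq_iff {α : Type*} [LinearOrder α] {n : ℕ} {f : Fin n → α}
    (hf : Monotone f) (ρ : Perm (Fin n)) :
    f ∘ ρ = f ↔ ∀ i j, f i < f j → ρ i < ρ j := by
  refine ⟨fun h i j hij => hf.reflect_lt ?_, fun h => ?_⟩
  · simpa only [← Function.comp_apply (f := f), h] using hij
  · have hmono : Monotone (f ∘ ⇑ρ⁻¹) := fun u v huv => by
      by_contra! hvu
      have hvu' := h _ _ hvu
      simp only [Perm.coe_inv, apply_symm_apply] at hvu'
      exact hvu'.not_ge huv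
    have hinv : f ∘ ⇑ρ⁻¹ = f := by
      simpa using Tuple.unique_monotone (τ := 1) hmono (by simpa using hf)
    funext x
    simpa using (congrFun hinv (ρ x)).symm

section SignedPerm

variable {n : ℕ}

theorem spContains_pair_iff (α : SignedPerm n) (s t : Bool) :
    SPContains α (Equiv.refl (Fin 2), ![s, t]) ↔
      ∃ i j : Fin n, i < j ∧ α.1 i < α.1 j ∧ α.2 i = s ∧ α.2 j = t := by
  constructor
  · rintro ⟨f, hf, hord, hsgn⟩
    exact ⟨f 0, f 1, hf Fin.zero_lt_one, (hord 0 1).1 Fin.zero_lt_one, hsgn 0, hsgn 1⟩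
  · rintro ⟨i, j, hij, hval, hsi, hsj⟩
    refine ⟨![i, j], ?_, ?_, ?_⟩
    · intro p q hpq
      fin_cases p <;> fin_cases q <;> simp_all
    · intro p q
      fin_cases p <;> fin_cases q <;> simp [hval, lt_asymm hval]
    · intro p
      fin_cases p <;> simp [hsi, hsj]

def HasNoMixedAscent (α : SignedPerm n) : Prop :=
  ∀ i j, i < j → α.2 i ≠ α.2 j → α.1 j < α.1 i

theorem avoidsAll_iff_hasNoMixedAscent (α : SignedPerm n) :
    AvoidsAll {p12b, p1b2} α ↔ HasNoMixedAscent α := by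
  simp only [AvoidsAll, Set.mem_insert_iff, Set.mem_singleton_iff, forall_eq_or_imp, forall_eq,
    p12b, p1b2, spContains_pair_iff, HasNoMixedAscent]
  constructor
  · rintro ⟨h₁, h₂⟩ i j hij hs
    refine (lt_or_gt_of_ne (α.1.injective.ne hij.ne)).resolve_left fun hlt => ?_
    cases hi : α.2 i <;> cases hj : α.2 j
    exacts [hs (hi.trans hj.symm), h₁ ⟨i, j, hij, hlt, hi, hj⟩,
      h₂ ⟨i, j, hij, hlt, hi, hj⟩, hs (hi.trans hj.symm)]
  · intro h
    constructor <;> rintro ⟨i, j, hij, hlt, hi, hj⟩ <;>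
      exact (h i j hij (by simp [hi, hj])).not_gt hlt

theorem hasNoMixedAscent_runSigns_iff (c : Composition n) (b : Bool) (π : Perm (Fin n)) :
    HasNoMixedAscent (π, c.runSigns b) ↔ ∀ i j, c.index i < c.index j → π j < π i := by
  refine ⟨fun h i j hij => ?_, fun h i j hij hs => ?_⟩
  · by_cases hodd : (c.index i : ℕ).bodd = (c.index j : ℕ).bodd
    · -- a run of the opposite sign separates the two runs, and `π` descends across both gaps
      have hnext : (c.index i : ℕ) + 1 < c.index j := by
        rw [Fin.lt_def] at hij
        refine lt_of_le_of_ne (Nat.succ_le_of_lt hij) fun he => ?_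
        simp [← he, Nat.bodd_succ] at hodd
      obtain ⟨k, hk⟩ :=
        c.index_surjective ⟨(c.index i : ℕ) + 1, hnext.trans (c.index j).isLt⟩
      have hik : c.index i < c.index k := by simp [hk, Fin.lt_def]
      have hkj : c.index k < c.index j := by simpa [hk, Fin.lt_def] using hnext
      have hsik : c.runSigns b i ≠ c.runSigns b k :=
        c.runSigns_ne_runSigns_iff.2 (by simp [hk, Nat.bodd_succ])
      have hskj : c.runSigns b k ≠ c.runSigns b j :=
        c.runSigns_ne_runSigns_iff.2 (by simp [hk, Nat.bodd_succ, hodd])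
      exact (h k j (c.index_monotone.reflect_lt hkj) hskj).trans
        (h i k (c.index_monotone.reflect_lt hik) hsik)
    · exact h i j (c.index_monotone.reflect_lt hij) ((c.runSigns_ne_runSigns_iff).2 hodd)
  · have hne : c.index i ≠ c.index j := fun he => (c.runSigns_ne_runSigns_iff).1 hs (by rw [he])
    exact h i j ((c.index_monotone hij.le).lt_of_ne hne)

theorem hasNoMixedAscent_runSigns_iff_index_comp (c : Composition n) (b : Bool)
    (π : Perm (Fin n)) :
    HasNoMixedAscent (π, c.runSigns b) ↔
      c.index ∘ ⇑(Fin.revPerm * π : Perm (Fin n)) = c.index := by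
  rw [hasNoMixedAscent_runSigns_iff, c.index_monotone.comp_perm_eq_iff]
  simp only [Perm.coe_mul, Function.comp_apply, Fin.revPerm_apply, Fin.rev_lt_rev]

theorem card_hasNoMixedAscent_runSigns (c : Composition n) (b : Bool) :
    Nat.card {π : Perm (Fin n) // HasNoMixedAscent (π, c.runSigns b)} =
      (c.blocks.map Nat.factorial).prod := by
  rw [← c.card_perm_index_comp_eq]
  exact Nat.card_congr (subtypeEquiv (Equiv.mulLeft Fin.revPerm)
    fun π => hasNoMixedAscent_runSigns_iff_index_comp c b π)

theorem card_hasNoMixedAscent (hn : 0 < n) :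
    Nat.card {α : SignedPerm n // HasNoMixedAscent α} =
      2 * ∑ c : Composition n, (c.blocks.map Nat.factorial).prod := by
  calc Nat.card {α : SignedPerm n // HasNoMixedAscent α}
      = Nat.card (Σ ε : Fin n → Bool, {π : Perm (Fin n) // HasNoMixedAscent (π, ε)}) :=
        Nat.card_congr ((subtypeEquiv (prodComm _ _) fun _ => Iff.rfl).trans
          (subtypeProdEquivSigmaSubtype fun ε π => HasNoMixedAscent (π, ε)))
    _ = ∑ ε : Fin n → Bool, Nat.card {π : Perm (Fin n) // HasNoMixedAscent (π, ε)} :=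
        Nat.card_sigma
    _ = ∑ p : Bool × Composition n,
          Nat.card {π : Perm (Fin n) // HasNoMixedAscent (π, p.2.runSigns p.1)} :=
        (Fintype.sum_bijective _ (Composition.runSigns_bijective hn) _ _ fun _ => rfl).symm
    _ = 2 * ∑ c : Composition n, (c.blocks.map Nat.factorial).prod := by
        simp only [card_hasNoMixedAscent_runSigns, Fintype.sum_prod_type, sum_const, card_univ,
          Fintype.card_bool, smul_eq_mul]

end SignedPerm

/-- b_n({12̄,1̄2}) = 2·Σ_{l=1}^n Σ_{i_1+⋯+i_l=n, i_j ≥ 1} ∏_j i_j!. -/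
theorem stmt3 (n : ℕ) (hn : 1 ≤ n) :
    bn n {p12b, p1b2} =
      2 * ∑ l ∈ Finset.Icc 1 n,
            ∑ c ∈ Finset.univ.filter (fun c : Composition n => c.length = l),
              (c.blocks.map Nat.factorial).prod := by
  rw [bn, Nat.card_congr (subtypeEquivRight avoidsAll_iff_hasNoMixedAscent),
    card_hasNoMixedAscent hn, sum_fiberwise_of_maps_to]
  exact fun c _ => mem_Icc.2 ⟨c.length_pos_of_pos hn, c.length_le⟩
end

section
/- For every natural number n ≥ 0, with T_1 = {12, 12̄, 1̄2}, one has b_n(T_1) = Σ_{d=0}^{n} Σ ∏_{j=0}^{d} i_j!, where the inner sum runs over all (d+1)-tuples (i_0, i_1, …, i_d) of nonnegative integers with i_0 + i_1 + … + i_d = n − d. -/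
/-!
A signed permutation avoids `12`, `12̄` and `1̄2` exactly when both entries of every ascent are
barred. If such a permutation of length `n + 1` has an unbarred entry, let position `k` hold the
first one: every earlier entry is barred and larger, every later entry is smaller, so the
permutation is the skew sum of an arbitrary barred permutation of length `k`, an unbarred
singleton and an avoider of length `n - k`. The counts therefore satisfy
`b (n + 1) = (n + 1)! + ∑_{k + m = n} k! b m`, and splitting off the first block shows that the
sum over compositions satisfies the same recurrence.
-/
open Finset

namespace Finset.Nat
variable {R : Type*} [CommSemiring R]

theorem sum_antidiagonalTuple_succ_prod (w : ℕ → R) (k m : ℕ) :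
    ∑ f ∈ antidiagonalTuple (k + 1) m, ∏ j, w (f j) =
      ∑ q ∈ antidiagonal m, w q.1 * ∑ f ∈ antidiagonalTuple k q.2, ∏ j, w (f j) := by
  simp_rw [Finset.mul_sum, Finset.sum_sigma']
  refine Finset.sum_nbij' (fun f => ⟨(f 0, ∑ j, Fin.tail f j), Fin.tail f⟩)
    (fun x => Fin.cons x.1.1 x.2) ?_ ?_ ?_ ?_ ?_
  · intro f hf
    simp_all [mem_antidiagonalTuple, Fin.sum_univ_succ, Fin.tail]
  · rintro ⟨⟨a, b⟩, t⟩ h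
    simp_all [mem_antidiagonalTuple, Fin.sum_univ_succ]
  · intro f _
    simp
  · rintro ⟨⟨a, b⟩, t⟩ h
    simp_all [mem_antidiagonalTuple]
  · intro f _
    simp [Fin.prod_univ_succ, Fin.tail]

theorem sum_antidiagonal_antidiagonal_comm {M : Type*} [AddCommMonoid M] (n : ℕ)
    (f : ℕ → ℕ → ℕ → M) :
    ∑ p ∈ antidiagonal n, ∑ q ∈ antidiagonal p.2, f p.1 q.1 q.2 =
      ∑ p ∈ antidiagonal n, ∑ q ∈ antidiagonal p.2, f q.1 p.1 q.2 := by
  simp_rw [Finset.sum_sigma']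
  refine Finset.sum_nbij' (fun x => ⟨(x.2.1, x.1.1 + x.2.2), (x.1.1, x.2.2)⟩)
    (fun x => ⟨(x.2.1, x.1.1 + x.2.2), (x.1.1, x.2.2)⟩) ?_ ?_ ?_ ?_ ?_ <;>
    rintro ⟨⟨a, b⟩, ⟨c, d⟩⟩ <;> simp <;> omega

end Finset.Nat

open Finset.Nat

section BlockSum

variable {R : Type*} [CommSemiring R] (w : ℕ → R)

def blockSum (n : ℕ) : R :=
  ∑ p ∈ antidiagonal n, ∑ f ∈ antidiagonalTuple (p.1 + 1) p.2, ∏ j, w (f j)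

theorem blockSum_zero : blockSum w 0 = w 0 := by
  simp [blockSum]

theorem blockSum_succ (n : ℕ) :
    blockSum w (n + 1) = w (n + 1) + ∑ p ∈ antidiagonal n, w p.1 * blockSum w p.2 := by
  rw [blockSum, Finset.Nat.sum_antidiagonal_succ]
  congr 1
  · simp
  · refine (sum_congr rfl fun p _ => sum_antidiagonalTuple_succ_prod w (p.1 + 1) p.2).trans ?_
    simp_rw [blockSum, Finset.mul_sum]
    exact sum_antidiagonal_antidiagonal_comm n
      fun d i m => ∑ f ∈ antidiagonalTuple (d + 1) m, w i * ∏ j, w (f j)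

theorem eq_blockSum_of_recurrence {a : ℕ → R} (h₀ : a 0 = w 0)
    (h : ∀ n, a (n + 1) = w (n + 1) + ∑ p ∈ antidiagonal n, w p.1 * a p.2) (n : ℕ) :
    a n = blockSum w n := by
  induction n using Nat.strong_induction_on with
  | _ n ih =>
    cases n with
    | zero => rw [h₀, blockSum_zero]
    | succ n =>
      rw [h, blockSum_succ]
      congr 1
      refine Finset.sum_congr rfl fun p hp => ?_
      rw [ih p.2 (Nat.lt_succ_of_le (Finset.HasAntidiagonal.antidiagonal.snd_le hp))]

end BlockSum

namespace Equiv.Perm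

variable {a c : ℕ}

/-- The skew sum `σ ⊖ τ`: the first `a` positions carry the pattern of `σ` on the top `a`
values, the last `c` positions the pattern of `τ` on the bottom `c` values. -/
def skewSum (σ : Perm (Fin a)) (τ : Perm (Fin c)) : Perm (Fin (a + c)) :=
  finSumFinEquiv.symm.trans <| (sumCongr σ τ).trans <|
    (sumComm _ _).trans <| finSumFinEquiv.trans (finCongr (Nat.add_comm c a))

@[simp]
theorem val_skewSum_castAdd (σ : Perm (Fin a)) (τ : Perm (Fin c)) (i : Fin a) :
    (σ.skewSum τ (Fin.castAdd c i) : ℕ) = σ i + c := by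
  simp [skewSum]

@[simp]
theorem val_skewSum_natAdd (σ : Perm (Fin a)) (τ : Perm (Fin c)) (j : Fin c) :
    (σ.skewSum τ (Fin.natAdd a j) : ℕ) = τ j := by
  simp [skewSum]

def IsSkewSplit (ρ : Perm (Fin (a + c))) : Prop :=
  ∀ i j, ρ (Fin.natAdd a j) < ρ (Fin.castAdd c i)

namespace IsSkewSplit

variable {ρ : Perm (Fin (a + c))}

theorem le_apply_castAdd (h : ρ.IsSkewSplit) (i : Fin a) : c ≤ (ρ (Fin.castAdd c i) : ℕ) := by
  have := card_le_card_of_injOn (s := univ) (t := Iio (ρ (Fin.castAdd c i)))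
    (fun j => ρ (Fin.natAdd a j)) (fun j _ => mem_Iio.2 (h i j))
    (fun j _ j' _ hj => (Fin.natAdd_inj a).1 (ρ.injective hj))
  simpa using this

theorem apply_natAdd_lt (h : ρ.IsSkewSplit) (j : Fin c) : (ρ (Fin.natAdd a j) : ℕ) < c := by
  have := card_le_card_of_injOn (s := univ) (t := Ioi (ρ (Fin.natAdd a j)))
    (fun i => ρ (Fin.castAdd c i)) (fun i _ => mem_Ioi.2 (h i j))
    (fun i _ i' _ hi => Fin.castAdd_inj.1 (ρ.injective hi))
  simp only [card_univ, Fintype.card_fin, Fin.card_Ioi] at this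
  omega

theorem exists_skewSum_eq (h : ρ.IsSkewSplit) : ∃ σ τ, skewSum σ τ = ρ := by
  let f (i : Fin a) : Fin a :=
    ⟨ρ (Fin.castAdd c i) - c, by have := h.le_apply_castAdd i; omega⟩
  let g (j : Fin c) : Fin c := ⟨ρ (Fin.natAdd a j), h.apply_natAdd_lt j⟩
  have hf : f.Injective := fun i i' hii' => by
    have := h.le_apply_castAdd i; have := h.le_apply_castAdd i'
    have hρ : ρ (Fin.castAdd c i) = ρ (Fin.castAdd c i') :=
      Fin.ext (by simp only [f, Fin.ext_iff] at hii'; omega)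
    exact Fin.castAdd_inj.1 (ρ.injective hρ)
  have hg : g.Injective := fun j j' hjj' =>
    (Fin.natAdd_inj a).1 (ρ.injective (Fin.ext (by simpa [g, Fin.ext_iff] using hjj')))
  refine ⟨ofBijective f (Finite.injective_iff_bijective.1 hf),
    ofBijective g (Finite.injective_iff_bijective.1 hg), Equiv.ext fun x => ?_⟩
  induction x using Fin.addCases with
  | left i => have := h.le_apply_castAdd i; ext; simp [f]; omega
  | right j => ext; simp [g]

end IsSkewSplit

theorem isSkewSplit_skewSum (σ : Perm (Fin a)) (τ : Perm (Fin c)) : (σ.skewSum τ).IsSkewSplit :=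
  fun i j => by simp [Fin.lt_def]; omega

theorem skewSum_injective :
    Function.Injective fun p : Perm (Fin a) × Perm (Fin c) => p.1.skewSum p.2 := by
  rintro ⟨σ, τ⟩ ⟨σ', τ'⟩ h
  have h' := fun x => congrArg Fin.val (Equiv.ext_iff.1 h x)
  simp only at h'
  refine Prod.ext (Equiv.ext fun i => ?_) (Equiv.ext fun j => ?_)
  · simpa [Fin.ext_iff] using h' (Fin.castAdd c i)
  · simpa [Fin.ext_iff] using h' (Fin.natAdd a j)

noncomputable def skewSumEquiv :
    Perm (Fin a) × Perm (Fin c) ≃ {ρ : Perm (Fin (a + c)) // ρ.IsSkewSplit} :=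
  ofBijective (fun p => ⟨p.1.skewSum p.2, isSkewSplit_skewSum p.1 p.2⟩)
    ⟨fun _ _ h => skewSum_injective (congrArg Subtype.val h),
      fun ρ => let ⟨σ, τ, h⟩ := ρ.2.exists_skewSum_eq; ⟨(σ, τ), Subtype.ext h⟩⟩

end Equiv.Perm

namespace SignedPerm

open Equiv

variable {n a c : ℕ}

def skewSum (α : SignedPerm a) (β : SignedPerm c) : SignedPerm (a + c) :=
  (α.1.skewSum β.1, Fin.append α.2 β.2)

@[simp]
theorem skewSum_snd_castAdd (α : SignedPerm a) (β : SignedPerm c) (i : Fin a) :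
    (α.skewSum β).2 (Fin.castAdd c i) = α.2 i :=
  Fin.append_left _ _ _

@[simp]
theorem skewSum_snd_natAdd (α : SignedPerm a) (β : SignedPerm c) (j : Fin c) :
    (α.skewSum β).2 (Fin.natAdd a j) = β.2 j :=
  Fin.append_right _ _ _

noncomputable def skewSumEquiv :
    SignedPerm a × SignedPerm c ≃ {γ : SignedPerm (a + c) // γ.1.IsSkewSplit} :=
  (prodProdProdComm _ _ _ _).trans <|
    (prodCongr Perm.skewSumEquiv (Fin.appendEquiv a c)).trans prodSubtypeFstEquivSubtypeProd.symm

theorem card_subtype_of_isSkewSplit {P : SignedPerm (a + c) → Prop} {Q : SignedPerm a → Prop}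
    {R : SignedPerm c → Prop} (hsplit : ∀ γ, P γ → γ.1.IsSkewSplit)
    (hP : ∀ α β, P (α.skewSum β) ↔ Q α ∧ R β) :
    Nat.card {γ // P γ} = Nat.card {α // Q α} * Nat.card {β // R β} := by
  calc Nat.card {γ // P γ}
      = Nat.card {γ : {γ : SignedPerm (a + c) // γ.1.IsSkewSplit} // P γ} :=
        Nat.card_congr (subtypeSubtypeEquivSubtype (hsplit _)).symm
    _ = Nat.card {p : SignedPerm a × SignedPerm c // Q p.1 ∧ R p.2} :=
        Nat.card_congr (skewSumEquiv.subtypeEquiv fun p => (hP p.1 p.2).symm).symm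
    _ = _ := by rw [Nat.card_congr subtypeProdEquivProd, Nat.card_prod]

theorem card_subtype_snd_eq (s : Fin n → Bool) :
    Nat.card {α : SignedPerm n // α.2 = s} = n.factorial := by
  have e : {α : SignedPerm n // α.2 = s} ≃ Perm (Fin n) :=
    { toFun := fun α => α.1.1
      invFun := fun σ => ⟨(σ, s), rfl⟩
      left_inv := fun ⟨⟨_, _⟩, h⟩ => by subst h; rfl
      right_inv := fun _ => rfl }
  rw [Nat.card_congr e, Nat.card_perm, Nat.card_fin]

def AscentsBarred (α : SignedPerm n) : Prop :=
  ∀ i j, i < j → α.1 i < α.1 j → α.2 i = true ∧ α.2 j = true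

theorem AscentsBarred.apply_lt {α : SignedPerm n} (h : α.AscentsBarred) {i j : Fin n}
    (hij : i < j) (hu : α.2 i = false ∨ α.2 j = false) : α.1 j < α.1 i := by
  rcases lt_trichotomy (α.1 i) (α.1 j) with hlt | heq | hgt
  · have := h i j hij hlt
    simp_all
  · exact absurd (α.1.injective heq) hij.ne
  · exact hgt

theorem ascentsBarred_of_forall_barred {α : SignedPerm n} (h : α.2 = fun _ => true) :
    α.AscentsBarred :=
  fun i j _ _ => by simp [h]

theorem ascentsBarred_skewSum (α : SignedPerm a) (β : SignedPerm c) :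
    (α.skewSum β).AscentsBarred ↔ α.AscentsBarred ∧ β.AscentsBarred := by
  simp only [AscentsBarred, Fin.forall_fin_add, Fin.lt_def, skewSum, Perm.val_skewSum_castAdd,
    Perm.val_skewSum_natAdd, Fin.val_castAdd, Fin.val_natAdd, Fin.append_left, Fin.append_right,
    add_lt_add_iff_left, add_lt_add_iff_right]
  constructor
  · exact fun h => ⟨fun i => (h.1 i).1, fun j => (h.2 j).2⟩
  · rintro ⟨hα, hβ⟩
    refine ⟨fun i => ⟨hα i, fun j _ hv => ?_⟩, fun j => ⟨fun i hji _ => ?_, hβ j⟩⟩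
    · have := (β.1 j).isLt; omega
    · have := i.isLt; omega

theorem card_ascentsBarred_zero :
    Nat.card {β : SignedPerm 0 // β.AscentsBarred} = Nat.factorial 0 :=
  Nat.card_eq_one_iff_unique.2
    ⟨⟨fun _ _ => Subtype.ext (Subsingleton.elim _ _)⟩,
      ⟨⟨(1, fun _ => true), fun i => i.elim0⟩⟩⟩

theorem card_ascentsBarred_head_unbarred (m : ℕ) :
    Nat.card {δ : SignedPerm (1 + m) // δ.AscentsBarred ∧ δ.2 (Fin.castAdd m 0) = false} =
      Nat.card {β : SignedPerm m // β.AscentsBarred} := by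
  rw [card_subtype_of_isSkewSplit (Q := fun ε : SignedPerm 1 => ε.2 = fun _ => false)
    (R := AscentsBarred), card_subtype_snd_eq, Nat.factorial_one, one_mul]
  · rintro δ ⟨hδ, h₀⟩ i j
    rw [Fin.fin_one_eq_zero i]
    exact hδ.apply_lt (by simp [Fin.lt_def]) (Or.inl h₀)
  · intro ε β
    have hε : ε.AscentsBarred := fun i j hij => absurd hij (by simp [Subsingleton.elim i j])
    simp [ascentsBarred_skewSum, hε, funext_iff, and_comm]

def firstUnbarred (α : SignedPerm n) : Option (Fin n) :=
  if h : ∃ i, α.2 i = false then some (Fin.find _ h) else none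

theorem firstUnbarred_eq_none_iff {α : SignedPerm n} :
    α.firstUnbarred = none ↔ α.2 = fun _ => true := by
  simp [firstUnbarred, funext_iff]

theorem firstUnbarred_eq_some_iff {α : SignedPerm n} {k : Fin n} :
    α.firstUnbarred = some k ↔ α.2 k = false ∧ ∀ j < k, α.2 j = true := by
  unfold firstUnbarred
  split_ifs with h
  · simp [Fin.find_eq_iff]
  · simp only [not_exists, Bool.not_eq_false] at h
    simp [h]

theorem card_ascentsBarred_firstUnbarred_eq_some {N a m : ℕ} (hN : a + (1 + m) = N) (k : Fin N)
    (hk : (k : ℕ) = a) :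
    Nat.card {γ : SignedPerm N // γ.AscentsBarred ∧ γ.firstUnbarred = some k} =
      a.factorial * Nat.card {β : SignedPerm m // β.AscentsBarred} := by
  subst hN
  obtain rfl : k = Fin.natAdd a (Fin.castAdd m 0) := Fin.ext (by simp [hk])
  rw [card_subtype_of_isSkewSplit (Q := fun α : SignedPerm a => α.2 = fun _ => true)
    (R := fun δ : SignedPerm (1 + m) => δ.AscentsBarred ∧ δ.2 (Fin.castAdd m 0) = false),
    card_subtype_snd_eq, card_ascentsBarred_head_unbarred]
  · rintro γ ⟨hγ, hk⟩ i j
    rw [firstUnbarred_eq_some_iff] at hk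
    have hj : γ.1 (Fin.natAdd a j) ≤ γ.1 (Fin.natAdd a (Fin.castAdd m 0)) := by
      rcases (show Fin.natAdd a (Fin.castAdd m 0) ≤ Fin.natAdd a j by simp [Fin.le_def]).eq_or_lt
        with h | h
      · rw [h]
      · exact (hγ.apply_lt h (Or.inl hk.1)).le
    exact hj.trans_lt (hγ.apply_lt (by simp [Fin.lt_def]) (Or.inr hk.1))
  · intro α δ
    have hhead : (∀ j < Fin.natAdd a (Fin.castAdd m 0), (α.skewSum δ).2 j = true) ↔
        α.2 = fun _ => true := by
      rw [funext_iff]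
      refine ⟨fun h i => by simpa using h (Fin.castAdd _ i) (by simp [Fin.lt_def]),
        fun h j hj => ?_⟩
      have hj' : j = Fin.castAdd _ ⟨j, by simpa [Fin.lt_def] using hj⟩ := rfl
      rw [hj', skewSum_snd_castAdd, h]
    rw [ascentsBarred_skewSum, firstUnbarred_eq_some_iff, hhead, skewSum_snd_natAdd]
    exact ⟨fun ⟨⟨_, hδ⟩, h₀, hα⟩ => ⟨hα, hδ, h₀⟩,
      fun ⟨hα, hδ, h₀⟩ => ⟨⟨ascentsBarred_of_forall_barred hα, hδ⟩, h₀, hα⟩⟩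

theorem card_ascentsBarred_succ (n : ℕ) :
    Nat.card {γ : SignedPerm (n + 1) // γ.AscentsBarred} =
      (n + 1).factorial +
        ∑ p ∈ antidiagonal n, p.1.factorial * Nat.card {β : SignedPerm p.2 // β.AscentsBarred} := by
  rw [← Nat.card_congr (Equiv.sigmaFiberEquiv
      fun γ : {γ : SignedPerm (n + 1) // γ.AscentsBarred} => γ.1.firstUnbarred),
    Nat.card_sigma, Fintype.sum_option]
  have hfiber (o : Option (Fin (n + 1))) :
      Nat.card {γ : {γ : SignedPerm (n + 1) // γ.AscentsBarred} // γ.1.firstUnbarred = o} =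
        Nat.card {γ : SignedPerm (n + 1) // γ.AscentsBarred ∧ γ.firstUnbarred = o} :=
    Nat.card_congr (Equiv.subtypeSubtypeEquivSubtypeInter AscentsBarred (·.firstUnbarred = o))
  simp only [hfiber]
  congr 1
  · simp_rw [firstUnbarred_eq_none_iff]
    rw [← card_subtype_snd_eq (fun _ => true)]
    exact Nat.card_congr (Equiv.subtypeEquivRight fun γ =>
      ⟨And.right, fun h => ⟨ascentsBarred_of_forall_barred h, h⟩⟩)
  · rw [Finset.Nat.sum_antidiagonal_eq_sum_range_succ_mk, ← Fin.sum_univ_eq_sum_range]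
    exact Finset.sum_congr rfl fun k _ =>
      card_ascentsBarred_firstUnbarred_eq_some (by omega) k rfl

end SignedPerm

theorem spContains_refl_iff {n : ℕ} (α : SignedPerm n) (b₀ b₁ : Bool) :
    SPContains α (Equiv.refl (Fin 2), ![b₀, b₁]) ↔
      ∃ i j, i < j ∧ α.1 i < α.1 j ∧ α.2 i = b₀ ∧ α.2 j = b₁ := by
  constructor
  · rintro ⟨f, hf, hord, hsign⟩
    exact ⟨f 0, f 1, hf Fin.zero_lt_one, (hord 0 1).1 Fin.zero_lt_one, hsign 0, hsign 1⟩
  · rintro ⟨i, j, hij, hv, h₀, h₁⟩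
    refine ⟨![i, j], ?_, ?_, ?_⟩
    · simp [Fin.strictMono_iff_lt_succ, hij]
    · simp [Fin.forall_fin_two, hv, hv.le]
    · simp [Fin.forall_fin_two, h₀, h₁]

theorem avoidsAll_iff_ascentsBarred {n : ℕ} (α : SignedPerm n) :
    AvoidsAll {p12, p12b, p1b2} α ↔ α.AscentsBarred := by
  simp only [AvoidsAll, Set.mem_insert_iff, Set.mem_singleton_iff, forall_eq_or_imp, forall_eq,
    p12, p12b, p1b2, spContains_refl_iff, SignedPerm.AscentsBarred, not_exists, not_and]
  constructor
  · rintro ⟨h₁, h₂, h₃⟩ i j hij hv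
    cases hi : α.2 i <;> cases hj : α.2 j
    · exact (h₁ i j hij hv hi hj).elim
    · exact (h₂ i j hij hv hi hj).elim
    · exact (h₃ i j hij hv hi hj).elim
    · exact ⟨rfl, rfl⟩
  · intro h
    refine ⟨?_, ?_, ?_⟩ <;> intro i j hij hv <;> simp [h i j hij hv]

/-- b_n(T₁) with T₁ = {12,12̄,1̄2} equals Σ_{d=0}^n Σ_{i_0+⋯+i_d=n-d} ∏_{j=0}^d i_j!. -/
theorem stmt4 (n : ℕ) :
    bn n {p12, p12b, p1b2} =
      ∑ d ∈ Finset.range (n + 1),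
        ∑ f ∈ Finset.Nat.antidiagonalTuple (d + 1) (n - d),
          ∏ j, Nat.factorial (f j) := by
  calc bn n {p12, p12b, p1b2}
      = Nat.card {α : SignedPerm n // α.AscentsBarred} :=
        Nat.card_congr (Equiv.subtypeEquivRight avoidsAll_iff_ascentsBarred)
    _ = blockSum Nat.factorial n :=
        eq_blockSum_of_recurrence (a := fun m => Nat.card {β : SignedPerm m // β.AscentsBarred})
          _ SignedPerm.card_ascentsBarred_zero SignedPerm.card_ascentsBarred_succ n
    _ = _ := Finset.Nat.sum_antidiagonal_eq_sum_range_succ_mk _ n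
end

section
/- For every natural number n ≥ 0, with T_2 = {12, 12̄, 1̄2̄}, one has b_n(T_2) = C_{n+1}, the (n+1)-st Catalan number. -/
/-!
Avoiding `12`, `12̄` and `1̄2̄` means that every ascent goes from a barred entry up to an unbarred
one. Let `a(n, v)` count such signed permutations whose unbarred entries all have value at least
`v`. Removing the last entry gives `a(n+1, v) = a(n, v-1) + ∑_{v ≤ w ≤ n} a(n, w)`: a barred last
entry must be the minimum, and an unbarred last entry `w` forces every smaller value to be barred.
Differencing in `v` yields the recurrence of Catalan's triangle, whence
`a(m+k+1, m) = binom(m+2k+3, k+1) - binom(m+2k+3, k)` and `a(n, 0) = C_{n+1}`.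
-/

namespace SignedPerm

def AscentsBarredToUnbarred {n : ℕ} (α : SignedPerm n) : Prop :=
  ∀ i j : Fin n, i < j → α.1 i < α.1 j → α.2 i = true ∧ α.2 j = false

theorem spContains_refl_iff {n : ℕ} (α : SignedPerm n) (b₀ b₁ : Bool) :
    SPContains α (Equiv.refl (Fin 2), ![b₀, b₁]) ↔
      ∃ i j : Fin n, i < j ∧ α.1 i < α.1 j ∧ α.2 i = b₀ ∧ α.2 j = b₁ := by
  constructor
  · rintro ⟨f, hf, hord, hsign⟩
    exact ⟨f 0, f 1, hf Fin.zero_lt_one, (hord 0 1).1 Fin.zero_lt_one,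
      by simpa using hsign 0, by simpa using hsign 1⟩
  · rintro ⟨i, j, hij, hlt, h₀, h₁⟩
    refine ⟨![i, j], Fin.strictMono_iff_lt_succ.2 (by simpa using hij), ?_, ?_⟩
    · simp [Fin.forall_fin_two, hlt, hlt.le]
    · simp [Fin.forall_fin_two, h₀, h₁]

theorem avoidsAll_p12_p12b_p1b2b_iff {n : ℕ} (α : SignedPerm n) :
    AvoidsAll {p12, p12b, p1b2b} α ↔ AscentsBarredToUnbarred α := by
  simp only [AvoidsAll, Set.mem_insert_iff, Set.mem_singleton_iff, forall_eq_or_imp, forall_eq,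
    p12, p12b, p1b2b, spContains_refl_iff, AscentsBarredToUnbarred]
  constructor
  · rintro ⟨h₁, h₂, h₃⟩ i j hij hlt
    cases hi : α.2 i <;> cases hj : α.2 j
    exacts [(h₁ ⟨i, j, hij, hlt, hi, hj⟩).elim, (h₂ ⟨i, j, hij, hlt, hi, hj⟩).elim, ⟨rfl, rfl⟩,
      (h₃ ⟨i, j, hij, hlt, hi, hj⟩).elim]
  · intro h
    refine ⟨?_, ?_, ?_⟩ <;> rintro ⟨i, j, hij, hlt, hi, hj⟩ <;> simp_all [h i j hij hlt]

/-- Append an entry of absolute value `w` at the end, shifting the values `≥ w` of `τ` up. -/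
def snocPerm {n : ℕ} (w : Fin (n + 1)) (τ : Equiv.Perm (Fin n)) : Equiv.Perm (Fin (n + 1)) :=
  (finSuccEquivLast.trans τ.optionCongr).trans (finSuccEquiv' w).symm

@[simp] theorem snocPerm_castSucc {n : ℕ} (w : Fin (n + 1)) (τ : Equiv.Perm (Fin n)) (i : Fin n) :
    snocPerm w τ i.castSucc = w.succAbove (τ i) := by
  simp [snocPerm]

@[simp] theorem snocPerm_last {n : ℕ} (w : Fin (n + 1)) (τ : Equiv.Perm (Fin n)) :
    snocPerm w τ (Fin.last n) = w := by
  simp [snocPerm]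

def snoc {n : ℕ} (w : Fin (n + 1)) (b : Bool) (β : SignedPerm n) : SignedPerm (n + 1) :=
  (snocPerm w β.1, Fin.snoc β.2 b)

theorem snoc_injective {n : ℕ} :
    Function.Injective fun x : (Fin (n + 1) × Bool) × SignedPerm n => snoc x.1.1 x.1.2 x.2 := by
  rintro ⟨⟨w, b⟩, τ, s⟩ ⟨⟨w', b'⟩, τ', s'⟩ h
  simp only [snoc, Prod.mk.injEq] at h
  obtain ⟨hσ, hs⟩ := h
  obtain ⟨rfl, rfl⟩ := Fin.snoc_injective2 hs
  have hw : w = w' := by simpa using congrArg (· (Fin.last n)) hσ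
  subst hw
  have hτ : τ = τ' := Equiv.ext fun i => by simpa using congrArg (· i.castSucc) hσ
  rw [hτ]

noncomputable def snocEquiv (n : ℕ) : (Fin (n + 1) × Bool) × SignedPerm n ≃ SignedPerm (n + 1) :=
  Equiv.ofBijective _ <| (Fintype.bijective_iff_injective_and_card _).2 ⟨snoc_injective, by
    simp [Fintype.card_perm, Nat.factorial_succ, pow_succ]; ring⟩

theorem ascentsBarredToUnbarred_snoc_iff {n : ℕ} (w : Fin (n + 1)) (b : Bool)
    (β : SignedPerm n) :
    AscentsBarredToUnbarred (snoc w b β) ↔ AscentsBarredToUnbarred β ∧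
      ∀ i, (β.1 i).castSucc < w → β.2 i = true ∧ b = false := by
  simp [AscentsBarredToUnbarred, Fin.forall_fin_succ', snoc, Fin.succAbove_lt_iff_castSucc_lt,
    (Fin.castSucc_lt_last _).not_gt, forall_and]
  tauto

/-- Absolute values are `0`-indexed, so `v = 0` imposes no bound. -/
def AscentsBarredToUnbarredAbove {n : ℕ} (v : ℕ) (α : SignedPerm n) : Prop :=
  AscentsBarredToUnbarred α ∧ ∀ i, α.2 i = false → v ≤ α.1 i

theorem ascentsBarredToUnbarredAbove_snoc_true_iff {n v : ℕ} (w : Fin (n + 1))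
    (β : SignedPerm n) :
    AscentsBarredToUnbarredAbove v (snoc w true β) ↔
      w = 0 ∧ AscentsBarredToUnbarredAbove (v - 1) β := by
  rw [AscentsBarredToUnbarredAbove, AscentsBarredToUnbarredAbove,
    ascentsBarredToUnbarred_snoc_iff]
  simp only [Fin.forall_fin_succ', snoc, Fin.snoc_castSucc, Fin.snoc_last, snocPerm_castSucc,
    Bool.true_eq_false, and_false, IsEmpty.forall_iff, and_true]
  constructor
  · rintro ⟨⟨hβ, hw⟩, hv⟩
    obtain rfl : w = 0 := by
      by_contra hw0
      have hw0 : 0 < (w : ℕ) := Fin.pos_iff_ne_zero.2 hw0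
      have hn : 0 < n := by omega
      exact hw (β.1.symm ⟨0, hn⟩) (by rw [Equiv.apply_symm_apply, Fin.lt_def]; exact hw0)
    refine ⟨rfl, hβ, fun i hi => ?_⟩
    have := hv i hi
    simp only [Fin.succAbove_zero, Fin.val_succ] at this
    omega
  · rintro ⟨rfl, hβ, hv⟩
    refine ⟨⟨hβ, fun i => by simp⟩, fun i hi => ?_⟩
    have := hv i hi
    simp only [Fin.succAbove_zero, Fin.val_succ]
    omega

theorem ascentsBarredToUnbarredAbove_snoc_false_iff {n v : ℕ} (w : Fin (n + 1))
    (β : SignedPerm n) :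
    AscentsBarredToUnbarredAbove v (snoc w false β) ↔
      v ≤ w ∧ AscentsBarredToUnbarredAbove w β := by
  rw [AscentsBarredToUnbarredAbove, AscentsBarredToUnbarredAbove,
    ascentsBarredToUnbarred_snoc_iff]
  simp only [Fin.forall_fin_succ', snoc, Fin.snoc_castSucc, Fin.snoc_last, snocPerm_castSucc,
    snocPerm_last, and_true, forall_const]
  have hbar : ∀ i, ((β.1 i).castSucc < w → β.2 i = true) ↔ (β.2 i = false → w ≤ (β.1 i : ℕ)) :=
    fun i => by cases β.2 i <;> simp [Fin.lt_def]
  simp only [hbar]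
  constructor
  · rintro ⟨⟨hβ, hw⟩, -, hv⟩
    exact ⟨hv, hβ, hw⟩
  · rintro ⟨hv, hβ, hw⟩
    refine ⟨⟨hβ, hw⟩, fun i hi => ?_, hv⟩
    rw [Fin.succAbove_of_le_castSucc _ _ (Fin.le_def.2 (hw i hi)), Fin.val_succ]
    exact (hv.trans (hw i hi)).trans (Nat.le_succ _)

noncomputable def countAbove (n v : ℕ) : ℕ :=
  Nat.card {α : SignedPerm n // AscentsBarredToUnbarredAbove v α}

theorem countAbove_zero (v : ℕ) : countAbove 0 v = 1 :=
  Nat.card_eq_one_iff_unique.2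
    ⟨inferInstance, ⟨⟨default, fun i => i.elim0, fun i => i.elim0⟩⟩⟩

theorem card_snoc_true (n v : ℕ) (w : Fin (n + 1)) :
    Nat.card {β : SignedPerm n // AscentsBarredToUnbarredAbove v (snoc w true β)} =
      if w = 0 then countAbove n (v - 1) else 0 := by
  simp_rw [ascentsBarredToUnbarredAbove_snoc_true_iff]
  split_ifs with hw
  · exact Nat.card_congr (Equiv.subtypeEquivRight fun β => by simp [hw])
  · exact @Nat.card_of_isEmpty _ ⟨fun β => hw β.2.1⟩

theorem card_snoc_false (n v : ℕ) (w : Fin (n + 1)) :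
    Nat.card {β : SignedPerm n // AscentsBarredToUnbarredAbove v (snoc w false β)} =
      if v ≤ w then countAbove n w else 0 := by
  simp_rw [ascentsBarredToUnbarredAbove_snoc_false_iff]
  split_ifs with hw
  · exact Nat.card_congr (Equiv.subtypeEquivRight fun β => by simp [hw])
  · exact @Nat.card_of_isEmpty _ ⟨fun β => hw β.2.1⟩

theorem countAbove_succ (n v : ℕ) :
    countAbove (n + 1) v = countAbove n (v - 1) + ∑ w ∈ Finset.Icc v n, countAbove n w := by
  have e := ((snocEquiv n).subtypeEquiv fun _ => Iff.rfl).symm.trans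
    (Equiv.subtypeProdEquivSigmaSubtype fun (a : Fin (n + 1) × Bool) β =>
      AscentsBarredToUnbarredAbove v (snoc a.1 a.2 β))
  rw [countAbove, Nat.card_congr e, Nat.card_sigma, Fintype.sum_prod_type]
  simp only [Fintype.sum_bool, card_snoc_true, card_snoc_false, Finset.sum_add_distrib,
    Finset.sum_ite_eq', Finset.mem_univ, if_true]
  rw [Fin.sum_univ_eq_sum_range (fun w => if v ≤ w then countAbove n w else 0), ← Finset.sum_filter]
  congr 2
  ext w
  simp only [Finset.mem_filter, Finset.mem_range, Finset.mem_Icc]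
  omega

theorem countAbove_of_le {n v : ℕ} (h : n ≤ v) : countAbove n v = 1 := by
  induction n generalizing v with
  | zero => exact countAbove_zero v
  | succ n ih =>
    rw [countAbove_succ, Finset.Icc_eq_empty (by omega), Finset.sum_empty, ih (by omega),
      add_zero]

theorem countAbove_succ_eq_add {n v : ℕ} (h : v ≤ n) :
    countAbove (n + 1) v = countAbove (n + 1) (v + 1) + countAbove n (v - 1) := by
  rw [countAbove_succ, countAbove_succ, ← Finset.add_sum_Ioc_eq_sum_Icc h,
    ← Finset.Icc_add_one_left_eq_Ioc, Nat.add_sub_cancel]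
  omega

theorem countAbove_succ_self (m : ℕ) : countAbove (m + 1) m = m + 2 := by
  induction m with
  | zero => rw [countAbove_succ_eq_add le_rfl, countAbove_of_le le_rfl, countAbove_zero]
  | succ m ih =>
    rw [countAbove_succ_eq_add (by omega), countAbove_of_le le_rfl, Nat.add_sub_cancel, ih]
    omega

/-- The truncation `0 - 1 = 0` in `countAbove_succ_eq_add` makes the column `m = 0` special. -/
theorem countAbove_add_choose (k m : ℕ) :
    countAbove (m + k + 1) m + (m + 2 * k + 3).choose k = (m + 2 * k + 3).choose (k + 1) := by
  induction k generalizing m with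
  | zero =>
    rw [add_zero, countAbove_succ_self, Nat.choose_zero_right, Nat.choose_one_right]
  | succ k ih =>
    induction m with
    | zero =>
      rw [countAbove_succ_eq_add (Nat.zero_le _), Nat.zero_sub]
      have h₁ := ih 1
      have h₀ := ih 0
      have p₁ := Nat.choose_succ_succ' (2 * k + 4) k
      have p₂ := Nat.choose_succ_succ' (2 * k + 4) (k + 1)
      have p₃ := Nat.choose_succ_succ' (2 * k + 3) k
      have p₄ := Nat.choose_succ_succ' (2 * k + 3) (k + 1)
      have hsymm := Nat.choose_symm_of_eq_add (show 2 * k + 3 = (k + 2) + (k + 1) by omega)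
      ring_nf at h₁ h₀ p₁ p₂ p₃ p₄ hsymm ⊢
      omega
    | succ m ihm =>
      rw [countAbove_succ_eq_add (by omega), Nat.add_sub_cancel]
      have h₂ := ih (m + 2)
      have p₁ := Nat.choose_succ_succ' (m + 2 * k + 5) k
      have p₂ := Nat.choose_succ_succ' (m + 2 * k + 5) (k + 1)
      ring_nf at ihm h₂ p₁ p₂ ⊢
      omega

theorem countAbove_zero_right (n : ℕ) : countAbove n 0 = catalan (n + 1) := by
  cases n with
  | zero => rw [countAbove_zero, catalan_one]
  | succ k =>
    have h := countAbove_add_choose k 0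
    rw [zero_add, zero_add] at h
    have hratio := Nat.choose_succ_right_eq (2 * k + 3) k
    rw [show 2 * k + 3 - k = k + 3 by omega] at hratio
    have hcat : (k + 3) * catalan (k + 2) = 2 * (2 * k + 3).choose (k + 1) := by
      rw [succ_mul_catalan_eq_centralBinom, Nat.centralBinom_eq_two_mul_choose,
        show 2 * (k + 2) = 2 * k + 3 + 1 by ring, Nat.choose_succ_succ',
        Nat.choose_symm_of_eq_add (show 2 * k + 3 = (k + 1) + (k + 2) by ring)]
      ring
    apply Nat.eq_of_mul_eq_mul_left (show 0 < k + 3 by omega)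
    linear_combination (k + 3) * h + hratio - hcat

end SignedPerm

/-- b_n(T₂) with T₂ = {12,12̄,1̄2̄} equals the (n+1)-st Catalan number. -/
theorem stmt5 (n : ℕ) :
    bn n {p12, p12b, p1b2b} = catalan (n + 1) := by
  rw [← SignedPerm.countAbove_zero_right, bn, SignedPerm.countAbove]
  exact Nat.card_congr <| Equiv.subtypeEquivRight fun α => by
    simp [SignedPerm.avoidsAll_p12_p12b_p1b2b_iff, SignedPerm.AscentsBarredToUnbarredAbove]
end

section
/- For every natural number n ≥ 0, with T_3 = {12, 12̄, 21}, one has b_n(T_3) = n! + n!·Σ_{j=1}^{n} 1/j (i.e. n! times (1 plus the n-th harmonic number)). -/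
/- ======================= auxiliary development ======================= -/

/-- Structural characterization of avoiders of `{12, 12̄, 21}`: either all entries are
barred, or there is a unique unbarred entry and every later entry has smaller value. -/
def Good {n : ℕ} (α : SignedPerm n) : Prop :=
  (∀ i, α.2 i = true) ∨
  ∃ i : Fin n, α.2 i = false ∧ (∀ j, j ≠ i → α.2 j = true) ∧ (∀ j, i < j → α.1 j < α.1 i)

lemma mono2 {n : ℕ} {i j : Fin n} (h : i < j) : StrictMono ![i, j] := by
  intro a b hab
  fin_cases a <;> fin_cases b <;> simp_all

lemma avoids_iff_good {n : ℕ} (α : SignedPerm n) :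
    AvoidsAll {p12, p12b, p21} α ↔ Good α := by
  constructor
  · intro h
    have h12 := h p12 (by simp)
    have h12b := h p12b (by simp)
    have h21 := h p21 (by simp)
    by_cases hall : ∀ i, α.2 i = true
    · exact Or.inl hall
    · push_neg at hall
      obtain ⟨i, hi⟩ := hall
      have hi' : α.2 i = false := by simpa using hi
      refine Or.inr ⟨i, hi', ?_, ?_⟩
      · intro j hj
        by_contra hjf
        have hjf' : α.2 j = false := by simpa using hjf
        have key : ∀ a b : Fin n, a < b → α.2 a = false → α.2 b = false → False := by
          intro a b hab ha hb
          rcases lt_or_gt_of_ne (fun e => absurd (α.1.injective e) hab.ne) with hv | hv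
          · exact h12 ⟨![a,b], mono2 hab, by
              intro p q; fin_cases p <;> fin_cases q <;>
                simp [p12, Equiv.refl, hv, lt_asymm hv], by
              intro j; fin_cases j <;> simp [p12, ha, hb]⟩
          · exact h21 ⟨![a,b], mono2 hab, by
              intro p q; fin_cases p <;> fin_cases q <;>
                simp [p21, Equiv.swap_apply_left, Equiv.swap_apply_right, hv, lt_asymm hv], by
              intro j; fin_cases j <;> simp [p21, ha, hb]⟩
        rcases lt_or_gt_of_ne hj with hlt | hlt
        · exact key j i hlt hjf' hi'
        · exact key i j hlt hi' hjf'
      · intro j hij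
        have hne : α.1 j ≠ α.1 i := fun e => absurd (α.1.injective e) hij.ne'
        rcases hne.lt_or_gt with hv | hv
        · exact hv
        · by_cases hjb : α.2 j = true
          · exact absurd (h12b ⟨![i,j], mono2 hij, by
              intro p q; fin_cases p <;> fin_cases q <;>
                simp [p12b, Equiv.refl, hv, lt_asymm hv], by
              intro k; fin_cases k <;> simp [p12b, hi', hjb]⟩) (fun x => x)
          · have hjf' : α.2 j = false := by simpa using hjb
            exact absurd (h12 ⟨![i,j], mono2 hij, by
              intro p q; fin_cases p <;> fin_cases q <;>
                simp [p12, Equiv.refl, hv, lt_asymm hv], by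
              intro k; fin_cases k <;> simp [p12, hi', hjf']⟩) (fun x => x)
  · rintro (hall | ⟨i, hif, huniq, hsuf⟩) τ hτ ⟨f, hf, hiff, hsgn⟩
    · have h0 := hsgn 0
      rw [hall (f 0)] at h0
      rcases hτ with rfl | rfl | rfl <;> simp [p12, p12b, p21] at h0
    · have hf01 : f 0 < f 1 := hf (by decide : (0:Fin 2) < 1)
      have key : ∀ k : Fin 2, α.2 (f k) = false → f k = i := by
        intro k hk
        by_contra hne
        rw [huniq _ hne] at hk; exact absurd hk (by simp)
      rcases hτ with rfl | rfl | rfl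
      · have e0 := key 0 (by rw [hsgn 0]; rfl)
        have e1 := key 1 (by rw [hsgn 1]; rfl)
        rw [e0, e1] at hf01; exact lt_irrefl _ hf01
      · have e0 := key 0 (by rw [hsgn 0]; rfl)
        have hlt : α.1 (f 0) < α.1 (f 1) := (hiff 0 1).mp (by simp [p12b])
        have := hsuf (f 1) (e0 ▸ hf01)
        rw [e0] at hlt; exact absurd hlt (not_lt.2 this.le)
      · have e0 := key 0 (by rw [hsgn 0]; rfl)
        have e1 := key 1 (by rw [hsgn 1]; rfl)
        rw [e0, e1] at hf01; exact lt_irrefl _ hf01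

/-- swapping lemma used in the double counting. -/
lemma aux_le {n : ℕ} (i k : Fin n) (π : Equiv.Perm (Fin n)) (hk : i ≤ k)
    (hπ : ∀ j, i < j → π j < π i) :
    (π * Equiv.swap i k) k = π i ∧ ∀ j, i ≤ j → (π * Equiv.swap i k) j ≤ π i := by
  constructor
  · simp [Equiv.Perm.mul_apply, Equiv.swap_apply_right]
  · intro j hj
    rcases eq_or_ne j k with rfl | hjk
    · simp [Equiv.Perm.mul_apply, Equiv.swap_apply_right]
    rcases eq_or_ne j i with rfl | hji
    · simp only [Equiv.Perm.mul_apply, Equiv.swap_apply_left]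
      rcases eq_or_ne k j with rfl | hkj
      · exact le_refl _
      · exact (hπ k (lt_of_le_of_ne hk (Ne.symm hkj))).le
    · rw [Equiv.Perm.mul_apply, Equiv.swap_apply_of_ne_of_ne hji hjk]
      exact (hπ j (lt_of_le_of_ne hj (Ne.symm hji))).le

/-- The number of permutations whose value at position `i` dominates all later values
is `n!/(n-i)`, stated multiplicatively. -/
lemma key_count {n : ℕ} (i : Fin n) :
    (n - (i : ℕ)) * Fintype.card {π : Equiv.Perm (Fin n) // ∀ j, i < j → π j < π i}
      = n.factorial := by
  classical
  have : Fintype.card ({k : Fin n // i ≤ k} × {π : Equiv.Perm (Fin n) // ∀ j, i < j → π j < π i})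
      = Fintype.card (Equiv.Perm (Fin n)) := by
    apply Fintype.card_of_bijective
      (f := fun x => (x.2.1 : Equiv.Perm (Fin n)) * Equiv.swap i x.1.1)
    constructor
    · rintro ⟨⟨k, hk⟩, ⟨π, hπ⟩⟩ ⟨⟨k', hk'⟩, ⟨π', hπ'⟩⟩ heq
      simp only at heq
      obtain ⟨e1, le1⟩ := aux_le i k π hk hπ
      obtain ⟨e2, le2⟩ := aux_le i k' π' hk' hπ'
      have hkk' : k = k' := by
        have b1 : (π * Equiv.swap i k) k' = π' i := by rw [heq]; exact e2
        have b2 : ∀ j, i ≤ j → (π * Equiv.swap i k) j ≤ π' i := by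
          intro j hj; rw [heq]; exact le2 j hj
        have h12 : (π * Equiv.swap i k) k ≤ (π * Equiv.swap i k) k' := by
          rw [b1]; exact b2 k hk
        have h21 : (π * Equiv.swap i k) k' ≤ (π * Equiv.swap i k) k := by
          rw [e1]; exact le1 k' hk'
        exact (π * Equiv.swap i k).injective (le_antisymm h12 h21)
      subst hkk'
      have : π = π' := by
        have := congrArg (fun σ => σ * Equiv.swap i k) heq
        simpa [mul_assoc] using this
      simp [this]
    · intro σ
      have hne : (Finset.Ici i).Nonempty := ⟨i, by simp⟩
      have hne' : ((Finset.Ici i).image σ).Nonempty := hne.image σ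
      set M := ((Finset.Ici i).image σ).max' hne' with hM
      have hMmem := ((Finset.Ici i).image σ).max'_mem hne'
      rw [Finset.mem_image] at hMmem
      obtain ⟨k, hk, hσk⟩ := hMmem
      rw [Finset.mem_Ici] at hk
      have hmax : ∀ j, i ≤ j → σ j ≤ σ k := by
        intro j hj
        rw [hσk]
        exact Finset.le_max' _ _ (Finset.mem_image_of_mem σ (Finset.mem_Ici.2 hj))
      refine ⟨⟨⟨k, hk⟩, ⟨σ * Equiv.swap i k, ?_⟩⟩, ?_⟩
      · intro j hij
        simp only [Equiv.Perm.mul_apply, Equiv.swap_apply_left]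
        rcases eq_or_ne j k with rfl | hjk
        · rw [Equiv.swap_apply_right]
          exact lt_of_le_of_ne (hmax i le_rfl) (fun e => hij.ne (σ.injective e))
        rcases eq_or_ne j i with rfl | hji
        · exact absurd rfl hij.ne
        rw [Equiv.swap_apply_of_ne_of_ne hji hjk]
        exact lt_of_le_of_ne (hmax j hij.le) (fun e => hjk (σ.injective e))
      · simp [mul_assoc]
  rw [Fintype.card_prod, Fintype.card_perm, Fintype.card_fin] at this
  rw [← this]
  congr 1
  have : Fintype.card {k : Fin n // i ≤ k} = (Finset.Ici i).card := by
    rw [Fintype.card_subtype]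
    congr 1
    ext k; simp
  rw [this, Fin.card_Ici]

def allBarredEquiv (n : ℕ) :
    {α : SignedPerm n // ∀ i, α.2 i = true} ≃ Equiv.Perm (Fin n) where
  toFun a := a.1.1
  invFun π := ⟨(π, fun _ => true), fun _ => rfl⟩
  left_inv a := Subtype.ext (Prod.ext rfl (funext fun i => (a.2 i).symm))
  right_inv π := rfl

lemma oneUnbarred_card (n : ℕ) [Fintype {α : SignedPerm n // ∃ i : Fin n, α.2 i = false ∧
      (∀ j, j ≠ i → α.2 j = true) ∧ (∀ j, i < j → α.1 j < α.1 i)}] :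
    Fintype.card {α : SignedPerm n // ∃ i : Fin n, α.2 i = false ∧
      (∀ j, j ≠ i → α.2 j = true) ∧ (∀ j, i < j → α.1 j < α.1 i)}
    = ∑ i : Fin n, Fintype.card {π : Equiv.Perm (Fin n) // ∀ j, i < j → π j < π i} := by
  classical
  rw [← Fintype.card_sigma]
  apply Fintype.card_congr
  symm
  refine Equiv.ofBijective
    (fun x => ⟨((x.2.1 : Equiv.Perm (Fin n)), fun j => decide (j ≠ x.1)),
      ⟨x.1, by simp, fun j hj => by simp [hj], x.2.2⟩⟩) ⟨?_, ?_⟩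
  · rintro ⟨i, π, h⟩ ⟨i', π', h'⟩ heq
    simp only [Subtype.mk.injEq, Prod.mk.injEq] at heq
    obtain ⟨h1, h2⟩ := heq
    have hii : i = i' := by
      have := congrFun h2 i
      simpa using this
    subst hii
    subst h1
    rfl
  · rintro ⟨α, i, h1, h2, h3⟩
    refine ⟨⟨i, α.1, h3⟩, ?_⟩
    refine Subtype.ext (Prod.ext rfl (funext fun j => ?_))
    rcases eq_or_ne j i with rfl | hj
    · simp [h1]
    · simp [hj, h2 j hj]

lemma card_good (n : ℕ) :
    Nat.card {α : SignedPerm n // Good α}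
      = n.factorial + ∑ i : Fin n,
          Fintype.card {π : Equiv.Perm (Fin n) // ∀ j, i < j → π j < π i} := by
  classical
  rw [Nat.card_eq_fintype_card]
  have hdisj : Disjoint (fun α : SignedPerm n => ∀ i, α.2 i = true)
      (fun α : SignedPerm n => ∃ i : Fin n, α.2 i = false ∧ (∀ j, j ≠ i → α.2 j = true) ∧
        (∀ j, i < j → α.1 j < α.1 i)) := by
    rw [disjoint_iff_inf_le]
    rintro α ⟨h1, i, h2, -⟩
    rw [h1 i] at h2
    exact absurd h2 (by simp)
  have hc := Fintype.card_subtype_or_disjoint _ _ hdisj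
  have e1 : Fintype.card {α : SignedPerm n // ∀ i, α.2 i = true}
      = n.factorial := by
    rw [Fintype.card_congr (allBarredEquiv n), Fintype.card_perm, Fintype.card_fin]
  rw [show (Fintype.card {α : SignedPerm n // Good α})
      = Fintype.card {α : SignedPerm n // (fun α : SignedPerm n => ∀ i, α.2 i = true) α ∨
        (fun α : SignedPerm n => ∃ i : Fin n, α.2 i = false ∧ (∀ j, j ≠ i → α.2 j = true) ∧
          (∀ j, i < j → α.1 j < α.1 i)) α} from
      Fintype.card_congr (Equiv.subtypeEquivRight fun α => Iff.rfl)]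
  rw [hc, e1, oneUnbarred_card n]

lemma harmonic_step (n : ℕ) (c : Fin n → ℕ)
    (hc : ∀ i : Fin n, (n - (i : ℕ)) * c i = n.factorial) :
    ∑ i : Fin n, (c i : ℚ) = (n.factorial : ℚ) * ∑ j ∈ Finset.Icc 1 n, 1 / (j : ℚ) := by
  have step1 : ∀ i : Fin n, (c i : ℚ) = (n.factorial : ℚ) * (1 / ((n - (i : ℕ) : ℕ) : ℚ)) := by
    intro i
    have hQ : ((n - (i : ℕ) : ℕ) : ℚ) * (c i : ℚ) = (n.factorial : ℚ) := by
      exact_mod_cast congrArg (Nat.cast : ℕ → ℚ) (hc i)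
    have hne : ((n - (i : ℕ) : ℕ) : ℚ) ≠ 0 := by
      have := i.isLt
      exact Nat.cast_ne_zero.mpr (by omega)
    rw [mul_one_div, eq_div_iff hne, mul_comm]
    exact hQ
  rw [Finset.sum_congr rfl (fun i _ => step1 i), Finset.mul_sum]
  rw [Fin.sum_univ_eq_sum_range (fun k => (n.factorial : ℚ) * (1 / ((n - k : ℕ) : ℚ))) n]
  apply Finset.sum_nbij' (i := fun k => n - k) (j := fun k => n - k)
  · intro a ha
    simp only [Finset.mem_range] at ha
    simp only [Finset.mem_Icc]
    omega
  · intro a ha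
    simp only [Finset.mem_Icc] at ha
    simp only [Finset.mem_range]
    omega
  · intro a ha
    simp only [Finset.mem_range] at ha
    omega
  · intro a ha
    simp only [Finset.mem_Icc] at ha
    omega
  · intro a ha
    rfl

/-- b_n(T₃) with T₃ = {12,12̄,21} equals n! + n!·Σ_{j=1}^n 1/j. -/
theorem stmt6 (n : ℕ) :
    (bn n {p12, p12b, p21} : ℚ) =
      (Nat.factorial n : ℚ) +
        (Nat.factorial n : ℚ) * ∑ j ∈ Finset.Icc 1 n, 1 / (j : ℚ) := by
  classical
  have h1 : bn n {p12, p12b, p21} = Nat.card {α : SignedPerm n // Good α} :=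
    Nat.card_congr (Equiv.subtypeEquivRight fun α => avoids_iff_good α)
  rw [h1, card_good n]
  push_cast
  rw [harmonic_step n
    (fun i => Fintype.card {π : Equiv.Perm (Fin n) // ∀ j, i < j → π j < π i})
    (fun i => key_count i)]
end

section
/- For every natural number n ≥ 0, with T_4 = {12, 12̄, 21̄} and T_5 = {12, 12̄, 2̄1}, one has b_n(T_4) = b_n(T_5) = n!·Σ_{j=0}^{n} 1/j!. -/
section Chunk1

variable {n : ℕ}

lemma strictMono_pair {i j : Fin n} (hij : i < j) : StrictMono ![i, j] := by
  intro p q hpq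
  fin_cases p <;> fin_cases q <;> simp_all

lemma contains_iff' (α : SignedPerm n) (τ : SignedPerm 2) :
    SPContains α τ ↔ ∃ i j : Fin n, i < j ∧
      (τ.1 0 < τ.1 1 ↔ α.1 i < α.1 j) ∧ (τ.1 1 < τ.1 0 ↔ α.1 j < α.1 i) ∧
      α.2 i = τ.2 0 ∧ α.2 j = τ.2 1 := by
  constructor
  · rintro ⟨f, hf, hiso, hs⟩
    exact ⟨f 0, f 1, hf (by decide : (0 : Fin 2) < 1), hiso 0 1, hiso 1 0, hs 0, hs 1⟩
  · rintro ⟨i, j, hij, h01, h10, hs0, hs1⟩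
    refine ⟨![i, j], strictMono_pair hij, ?_, ?_⟩
    · intro p q
      fin_cases p <;> fin_cases q <;>
        simp_all [lt_irrefl]
    · intro j'
      fin_cases j' <;> simp_all

end Chunk1
section Chunk2

variable {n : ℕ}

lemma avoidsAll_triple (a b c : SignedPerm 2) (α : SignedPerm n) :
    AvoidsAll {a, b, c} α ↔
      ¬SPContains α a ∧ ¬SPContains α b ∧ ¬SPContains α c := by
  simp [AvoidsAll]

/-- signs: no `false` before a `true` -/
def SignInit {n : ℕ} (α : SignedPerm n) : Prop :=
  ∀ i j : Fin n, i < j → α.2 i = false → α.2 j = false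

/-- unbarred positions carry decreasing values -/
def TailAnti {n : ℕ} (α : SignedPerm n) : Prop :=
  ∀ i j : Fin n, i < j → α.2 i = false → α.2 j = false → α.1 j < α.1 i

/-- every barred value is below every unbarred value -/
def BarLt {n : ℕ} (α : SignedPerm n) : Prop :=
  ∀ i j : Fin n, α.2 i = true → α.2 j = false → α.1 i < α.1 j

lemma avoids_T4_iff (α : SignedPerm n) :
    AvoidsAll {p12, p12b, p21b} α ↔ SignInit α ∧ TailAnti α := by
  rw [avoidsAll_triple]
  constructor
  · rintro ⟨h12, h12b, h21b⟩
    constructor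
    · intro i j hij hi
      by_contra hj
      rw [Bool.not_eq_false] at hj
      have hne : α.1 i ≠ α.1 j := fun h => absurd (α.1.injective h) (ne_of_lt hij)
      rcases hne.lt_or_gt with hlt | hlt
      · exact h12b ((contains_iff' α p12b).mpr ⟨i, j, hij,
          iff_of_true (by decide) hlt, iff_of_false (by decide) (asymm hlt), hi, hj⟩)
      · exact h21b ((contains_iff' α p21b).mpr ⟨i, j, hij,
          iff_of_false (by simp [p21b]) (asymm hlt), iff_of_true (by simp [p21b]) hlt, hi, hj⟩)
    · intro i j hij hi hj
      have hne : α.1 i ≠ α.1 j := fun h => absurd (α.1.injective h) (ne_of_lt hij)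
      rcases hne.lt_or_gt with hlt | hlt
      · exact absurd ((contains_iff' α p12).mpr ⟨i, j, hij,
          iff_of_true (by decide) hlt, iff_of_false (by decide) (asymm hlt), hi, hj⟩) h12
      · exact hlt
  · rintro ⟨hS, hA⟩
    refine ⟨?_, ?_, ?_⟩
    · intro hc
      obtain ⟨i, j, hij, h01, h10, hs0, hs1⟩ := (contains_iff' α p12).mp hc
      exact absurd (h01.mp (by decide)) (asymm (hA i j hij hs0 hs1))
    · intro hc
      obtain ⟨i, j, hij, h01, h10, hs0, hs1⟩ := (contains_iff' α p12b).mp hc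
      have := hS i j hij hs0
      simp [p12b] at hs1 this
      exact absurd hs1 (by simp [this])
    · intro hc
      obtain ⟨i, j, hij, h01, h10, hs0, hs1⟩ := (contains_iff' α p21b).mp hc
      have := hS i j hij hs0
      simp [p21b] at hs1 this
      exact absurd hs1 (by simp [this])

lemma avoids_T5_iff (α : SignedPerm n) :
    AvoidsAll {p12, p12b, p2b1} α ↔ TailAnti α ∧ BarLt α := by
  rw [avoidsAll_triple]
  constructor
  · rintro ⟨h12, h12b, h2b1⟩
    constructor
    · intro i j hij hi hj
      have hne : α.1 i ≠ α.1 j := fun h => absurd (α.1.injective h) (ne_of_lt hij)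
      rcases hne.lt_or_gt with hlt | hlt
      · exact absurd ((contains_iff' α p12).mpr ⟨i, j, hij,
          iff_of_true (by decide) hlt, iff_of_false (by decide) (asymm hlt), hi, hj⟩) h12
      · exact hlt
    · intro i j hi hj
      have hijne : i ≠ j := by
        intro h; subst h; simp [hi] at hj
      have hne : α.1 i ≠ α.1 j := fun h => absurd (α.1.injective h) hijne
      rcases hne.lt_or_gt with hlt | hlt
      · exact hlt
      · exfalso
        rcases hijne.lt_or_gt with hij | hij
        · exact h2b1 ((contains_iff' α p2b1).mpr ⟨i, j, hij,
            iff_of_false (by simp [p2b1]) (asymm hlt), iff_of_true (by simp [p2b1]) hlt,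
            hi, hj⟩)
        · exact h12b ((contains_iff' α p12b).mpr ⟨j, i, hij,
            iff_of_true (by decide) hlt, iff_of_false (by decide) (asymm hlt), hj, hi⟩)
  · rintro ⟨hA, hB⟩
    refine ⟨?_, ?_, ?_⟩
    · intro hc
      obtain ⟨i, j, hij, h01, h10, hs0, hs1⟩ := (contains_iff' α p12).mp hc
      exact absurd (h01.mp (by decide)) (asymm (hA i j hij hs0 hs1))
    · intro hc
      obtain ⟨i, j, hij, h01, h10, hs0, hs1⟩ := (contains_iff' α p12b).mp hc
      exact absurd (h01.mp (by decide)) (asymm (hB j i hs1 hs0))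
    · intro hc
      obtain ⟨i, j, hij, h01, h10, hs0, hs1⟩ := (contains_iff' α p2b1).mp hc
      exact absurd (h10.mp (by simp [p2b1])) (asymm (hB i j hs0 hs1))

end Chunk2
section Chunk3

variable {n k : ℕ}

open Finset

/-- complement of the image of `g` has `n - k` elements -/
lemma cardC (g : Fin k ↪ Fin n) : ((univ.image g)ᶜ : Finset (Fin n)).card = n - k := by
  rw [Finset.card_compl, Finset.card_image_of_injective _ g.injective]
  simp

lemma tail_idx_lt {i : Fin n} (hk : k ≤ n) (h : ¬ (i : ℕ) < k) : n - 1 - (i : ℕ) < n - k := by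
  have := i.isLt; omega

/-- The underlying function of the canonical permutation determined by the head
injection `g` (on positions `< k`) and decreasing on the tail. -/
def coreF (hk : k ≤ n) (g : Fin k ↪ Fin n) : Fin n → Fin n := fun i =>
  if h : (i : ℕ) < k then g ⟨i, h⟩
  else ((univ.image g)ᶜ : Finset (Fin n)).orderEmbOfFin (cardC g) ⟨n - 1 - i, tail_idx_lt hk h⟩

lemma coreF_injective (hk : k ≤ n) (g : Fin k ↪ Fin n) : Function.Injective (coreF hk g) := by
  intro i j hij
  unfold coreF at hij
  split_ifs at hij with hi hj hj
  · have := g.injective hij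
    exact Fin.ext (congrArg Fin.val this : ((⟨i, hi⟩ : Fin k) : ℕ) = _)
  · exfalso
    have h1 : g ⟨i, hi⟩ ∈ univ.image g := Finset.mem_image.mpr ⟨_, Finset.mem_univ _, rfl⟩
    have h2 := Finset.orderEmbOfFin_mem ((univ.image g)ᶜ : Finset (Fin n)) (cardC g)
      ⟨n - 1 - j, tail_idx_lt hk hj⟩
    rw [← hij] at h2
    exact (Finset.mem_compl.mp h2) h1
  · exfalso
    have h1 : g ⟨j, hj⟩ ∈ univ.image g := Finset.mem_image.mpr ⟨_, Finset.mem_univ _, rfl⟩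
    have h2 := Finset.orderEmbOfFin_mem ((univ.image g)ᶜ : Finset (Fin n)) (cardC g)
      ⟨n - 1 - i, tail_idx_lt hk hi⟩
    rw [hij] at h2
    exact (Finset.mem_compl.mp h2) h1
  · have := (((univ.image g)ᶜ : Finset (Fin n)).orderEmbOfFin (cardC g)).injective hij
    have h3 : n - 1 - (i : ℕ) = n - 1 - (j : ℕ) := congrArg Fin.val this
    have := i.isLt; have := j.isLt
    exact Fin.ext (by omega)

/-- The canonical permutation. -/
noncomputable def core (hk : k ≤ n) (g : Fin k ↪ Fin n) : Equiv.Perm (Fin n) :=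
  Equiv.ofBijective _ (Finite.injective_iff_bijective.mp (coreF_injective hk g))

lemma core_apply (hk : k ≤ n) (g : Fin k ↪ Fin n) (i : Fin n) :
    core hk g i = coreF hk g i := rfl

lemma core_lt (hk : k ≤ n) (g : Fin k ↪ Fin n) {i : Fin n} (h : (i : ℕ) < k) :
    core hk g i = g ⟨i, h⟩ := by
  rw [core_apply, coreF, dif_pos h]

lemma core_ge (hk : k ≤ n) (g : Fin k ↪ Fin n) {i : Fin n} (h : ¬ (i : ℕ) < k) :
    core hk g i = ((univ.image g)ᶜ : Finset (Fin n)).orderEmbOfFin (cardC g)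
      ⟨n - 1 - i, tail_idx_lt hk h⟩ := by
  rw [core_apply, coreF, dif_neg h]

lemma core_ge_mem (hk : k ≤ n) (g : Fin k ↪ Fin n) {i : Fin n} (h : ¬ (i : ℕ) < k) :
    core hk g i ∈ ((univ.image g)ᶜ : Finset (Fin n)) := by
  rw [core_ge hk g h]; exact Finset.orderEmbOfFin_mem _ _ _

lemma core_tail_lt_iff (hk : k ≤ n) (g : Fin k ↪ Fin n) {i j : Fin n}
    (hi : ¬ (i : ℕ) < k) (hj : ¬ (j : ℕ) < k) :
    core hk g i < core hk g j ↔ j < i := by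
  rw [core_ge hk g hi, core_ge hk g hj,
    (((univ.image g)ᶜ : Finset (Fin n)).orderEmbOfFin (cardC g)).lt_iff_lt]
  have := i.isLt; have := j.isLt
  constructor <;> intro h <;>
    · rw [Fin.lt_def] at * ; simp only [] at h ⊢; omega

/-- membership in the image of `g` is equivalent to the `core`-preimage being `< k` -/
lemma core_symm_lt_iff (hk : k ≤ n) (g : Fin k ↪ Fin n) (i : Fin n) :
    ((core hk g).symm i : ℕ) < k ↔ i ∈ univ.image g := by
  constructor
  · intro h
    have := core_lt hk g h
    rw [Equiv.apply_symm_apply] at this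
    rw [this]
    exact Finset.mem_image.mpr ⟨_, Finset.mem_univ _, rfl⟩
  · intro h
    by_contra hc
    have := core_ge_mem hk g hc
    rw [Equiv.apply_symm_apply] at this
    exact (Finset.mem_compl.mp this) h

/-- Uniqueness: any injective function with the same head and strictly decreasing
tail agrees with `core`. -/
lemma core_unique (hk : k ≤ n) (g : Fin k ↪ Fin n) (w : Fin n → Fin n)
    (hw : Function.Injective w)
    (hhead : ∀ (j : ℕ) (hj : j < k), w ⟨j, lt_of_lt_of_le hj hk⟩ = g ⟨j, hj⟩)
    (htail : ∀ i j : Fin n, ¬ (i : ℕ) < k → ¬ (j : ℕ) < k → i < j → w j < w i)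
    (i : Fin n) : w i = core hk g i := by
  by_cases h : (i : ℕ) < k
  · rw [core_lt hk g h, ← hhead i h]
  · -- consider u : Fin (n-k) → Fin n, m ↦ w ⟨n-1-m⟩ : strictly monotone into (image g)ᶜ
    have hklt : k < n := by have := i.isLt; omega
    set C : Finset (Fin n) := (univ.image g)ᶜ with hC
    have hu : ∀ m : Fin (n - k), ¬ ((⟨n - 1 - (m : ℕ), by omega⟩ : Fin n) : ℕ) < k := by
      intro m; have := m.isLt; simp; omega
    set u : Fin (n - k) → Fin n := fun m => w ⟨n - 1 - (m : ℕ), by have := m.isLt; omega⟩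
      with hudef
    have humem : ∀ m, u m ∈ C := by
      intro m
      rw [Finset.mem_compl]
      intro hmem
      obtain ⟨j, _, hj⟩ := Finset.mem_image.mp hmem
      have : w ⟨j, lt_of_lt_of_le j.isLt hk⟩ = u m := by
        rw [hhead j j.isLt]; exact_mod_cast hj
      have hje := hw this
      have : (j : ℕ) = n - 1 - (m : ℕ) := congrArg Fin.val hje
      have := j.isLt; have := m.isLt
      have := hu m
      simp at this
      omega
    have humono : StrictMono u := by
      intro a b hab
      refine htail _ _ (hu b) (hu a) ?_
      rw [Fin.lt_def]
      simp only []
      have := a.isLt; have := b.isLt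
      have : (a : ℕ) < (b : ℕ) := hab
      omega
    have hueq : u = fun m => C.orderEmbOfFin (cardC g) m :=
      Finset.orderEmbOfFin_unique (cardC g) humem humono
    have hm : n - 1 - (n - 1 - (i : ℕ)) = (i : ℕ) := by have := i.isLt; omega
    have : w i = u ⟨n - 1 - (i : ℕ), tail_idx_lt hk h⟩ := by
      rw [hudef]
      congr 1
      exact Fin.ext (by simp [hm])
    rw [this, hueq, core_ge hk g h]

end Chunk3
section Chunk4

variable {n : ℕ}

open Finset

lemma lower_card {s : Finset (Fin n)} (hlow : ∀ i j : Fin n, i ≤ j → j ∈ s → i ∈ s)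
    (i : Fin n) : i ∈ s ↔ (i : ℕ) < s.card := by
  constructor
  · intro hi
    have hsub : Finset.Iic i ⊆ s := fun j hj => hlow j i (Finset.mem_Iic.mp hj) hi
    have := Finset.card_le_card hsub
    rw [Fin.card_Iic] at this
    omega
  · intro hi
    by_contra h
    have hsub : s ⊆ Finset.Iio i := by
      intro j hj
      rw [Finset.mem_Iio]
      by_contra hji
      exact h (hlow i j (not_lt.mp hji) hj)
    have := Finset.card_le_card hsub
    rw [Fin.card_Iio] at this
    omega

/-- The parameter type: a length `k ≤ n` together with an injection `Fin k ↪ Fin n`. -/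
abbrev SigT (n : ℕ) := Σ k : Fin (n + 1), (Fin (k : ℕ) ↪ Fin n)

lemma sig_le (x : SigT n) : ((x.1 : ℕ) : ℕ) ≤ n := Nat.lt_succ_iff.mp x.1.isLt

/-- the T4-avoider associated to a parameter -/
noncomputable def B4 (x : SigT n) : SignedPerm n :=
  (core (sig_le x) x.2, fun i => decide ((i : ℕ) < (x.1 : ℕ)))

lemma B4_avoids (x : SigT n) : AvoidsAll {p12, p12b, p21b} (B4 x) := by
  rw [avoids_T4_iff]
  constructor
  · intro i j hij hi
    simp only [B4, decide_eq_false_iff_not, not_lt] at hi ⊢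
    have : (i : ℕ) < (j : ℕ) := hij
    omega
  · intro i j hij hi hj
    simp only [B4, decide_eq_false_iff_not, not_lt] at hi hj
    exact (core_tail_lt_iff (sig_le x) x.2 (not_lt.mpr hj) (not_lt.mpr hi)).mpr hij

lemma B4_inj : Function.Injective (B4 (n := n)) := by
  rintro ⟨k1, g1⟩ ⟨k2, g2⟩ hxy
  have hsigns := congrArg Prod.snd hxy
  have hperm := congrArg Prod.fst hxy
  simp only [B4] at hsigns hperm
  have hk : (k1 : ℕ) = (k2 : ℕ) := by
    by_contra hne
    have hiff : ∀ i : Fin n, ((i : ℕ) < (k1 : ℕ) ↔ (i : ℕ) < (k2 : ℕ)) := by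
      intro i
      have := congrFun hsigns i
      simpa [decide_eq_decide] using this
    rcases lt_or_gt_of_ne hne with h | h
    · have hk1n : (k1 : ℕ) < n := lt_of_lt_of_le h (Nat.lt_succ_iff.mp k2.isLt)
      have := hiff ⟨k1, hk1n⟩
      simp [h] at this
    · have hk2n : (k2 : ℕ) < n := lt_of_lt_of_le h (Nat.lt_succ_iff.mp k1.isLt)
      have := hiff ⟨k2, hk2n⟩
      simp [h] at this
  have hkk : k1 = k2 := Fin.ext hk
  subst hkk
  have hg : g1 = g2 := by
    apply DFunLike.ext
    intro j
    have hjn : (j : ℕ) < n := lt_of_lt_of_le j.isLt (Nat.lt_succ_iff.mp k1.isLt)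
    have h1 := core_lt (sig_le ⟨k1, g1⟩) g1 (i := ⟨j, hjn⟩) (by simpa using j.isLt)
    have h2 := core_lt (sig_le ⟨k1, g2⟩) g2 (i := ⟨j, hjn⟩) (by simpa using j.isLt)
    have := congrFun (congrArg (fun (e : Equiv.Perm (Fin n)) => (e : Fin n → Fin n)) hperm)
      ⟨j, hjn⟩
    simp only [h1, h2] at this
    simpa [Fin.eta] using this
  rw [hg]

lemma B4_surj : ∀ α : SignedPerm n, AvoidsAll {p12, p12b, p21b} α → ∃ x : SigT n, B4 x = α := by
  intro α hα
  obtain ⟨hS, hA⟩ := (avoids_T4_iff α).mp hα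
  set s : Finset (Fin n) := univ.filter (fun i => α.2 i = true) with hs
  set k : ℕ := s.card with hkdef
  have hk : k ≤ n := by
    have := Finset.card_filter_le univ (fun i => α.2 i = true)
    simpa using this
  have hlow : ∀ i j : Fin n, i ≤ j → j ∈ s → i ∈ s := by
    intro i j hij hj
    rw [hs, Finset.mem_filter] at hj ⊢
    refine ⟨Finset.mem_univ _, ?_⟩
    rcases eq_or_lt_of_le hij with rfl | hlt
    · exact hj.2
    · by_contra hi
      rw [Bool.not_eq_true] at hi
      rw [hS i j hlt hi] at hj
      simp at hj
  have sign_iff : ∀ i : Fin n, α.2 i = true ↔ (i : ℕ) < k := by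
    intro i
    rw [← lower_card hlow i]
    simp [hs]
  have sign_false : ∀ i : Fin n, α.2 i = false ↔ ¬ (i : ℕ) < k := by
    intro i
    rw [← sign_iff i]
    cases h : α.2 i <;> simp
  set g : Fin k ↪ Fin n :=
    ⟨fun j => α.1 ⟨j, lt_of_lt_of_le j.isLt hk⟩, by
      intro a b hab
      simpa [Fin.ext_iff] using α.1.injective hab⟩ with hgdef
  refine ⟨⟨⟨k, Nat.lt_succ_iff.mpr hk⟩, g⟩, ?_⟩
  have hcore : ∀ i : Fin n, α.1 i = core hk g i := by
    apply core_unique hk g _ α.1.injective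
    · intro j hj; rfl
    · intro i j hi hj hij
      exact hA i j hij ((sign_false i).mpr hi) ((sign_false j).mpr hj)
  apply Prod.ext
  · apply Equiv.ext
    intro i
    exact (hcore i).symm
  · funext i
    have := sign_iff i
    cases hb : α.2 i
    · simp only [B4]
      simp [hb] at this
      simpa using this
    · simp only [B4]
      simp [hb] at this
      simpa using this

end Chunk4
section Chunk5

variable {n : ℕ}

open Finset

/-- the T5-avoider associated to a parameter -/
noncomputable def B5 (x : SigT n) : SignedPerm n :=
  ((core (sig_le x) x.2).symm, fun i => decide (((core (sig_le x) x.2).symm i : ℕ) < (x.1 : ℕ)))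

lemma B5_avoids (x : SigT n) : AvoidsAll {p12, p12b, p2b1} (B5 x) := by
  rw [avoids_T5_iff]
  constructor
  · intro i j hij hi hj
    simp only [B5, decide_eq_false_iff_not, not_lt] at hi hj ⊢
    -- positions i < j with both preimage values ≥ k; want symm j < symm i
    have hij' : core (sig_le x) x.2 ((core (sig_le x) x.2).symm i) <
        core (sig_le x) x.2 ((core (sig_le x) x.2).symm j) := by
      simpa using hij
    exact (core_tail_lt_iff (sig_le x) x.2 (not_lt.mpr hi) (not_lt.mpr hj)).mp hij'
  · intro i j hi hj
    simp only [B5, decide_eq_true_eq, decide_eq_false_iff_not, not_lt] at hi hj ⊢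
    exact Fin.lt_def.mpr (lt_of_lt_of_le hi hj)

lemma B5_inj : Function.Injective (B5 (n := n)) := by
  rintro ⟨k1, g1⟩ ⟨k2, g2⟩ hxy
  have hsigns := congrArg Prod.snd hxy
  have hperm := congrArg Prod.fst hxy
  simp only [B5] at hsigns hperm
  have hpermc : core (sig_le ⟨k1, g1⟩) g1 = core (sig_le ⟨k2, g2⟩) g2 := by
    have := congrArg Equiv.symm hperm
    simpa using this
  have hk : (k1 : ℕ) = (k2 : ℕ) := by
    by_contra hne
    have hiff : ∀ i : Fin n,
        (((core (sig_le ⟨k1, g1⟩) g1).symm i : ℕ) < (k1 : ℕ) ↔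
          ((core (sig_le ⟨k2, g2⟩) g2).symm i : ℕ) < (k2 : ℕ)) := by
      intro i
      have := congrFun hsigns i
      simpa [decide_eq_decide] using this
    rcases lt_or_gt_of_ne hne with h | h
    · have hk1n : (k1 : ℕ) < n := lt_of_lt_of_le h (Nat.lt_succ_iff.mp k2.isLt)
      have := hiff (core (sig_le ⟨k1, g1⟩) g1 ⟨k1, hk1n⟩)
      rw [Equiv.symm_apply_apply, ← hpermc, Equiv.symm_apply_apply] at this
      simp [h] at this
    · have hk2n : (k2 : ℕ) < n := lt_of_lt_of_le h (Nat.lt_succ_iff.mp k1.isLt)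
      have := hiff (core (sig_le ⟨k1, g1⟩) g1 ⟨k2, hk2n⟩)
      rw [Equiv.symm_apply_apply, ← hpermc, Equiv.symm_apply_apply] at this
      simp [h] at this
  have hkk : k1 = k2 := Fin.ext hk
  subst hkk
  have hg : g1 = g2 := by
    apply DFunLike.ext
    intro j
    have hjn : (j : ℕ) < n := lt_of_lt_of_le j.isLt (Nat.lt_succ_iff.mp k1.isLt)
    have h1 := core_lt (sig_le ⟨k1, g1⟩) g1 (i := ⟨j, hjn⟩) (by simpa using j.isLt)
    have h2 := core_lt (sig_le ⟨k1, g2⟩) g2 (i := ⟨j, hjn⟩) (by simpa using j.isLt)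
    have := congrFun (congrArg (fun (e : Equiv.Perm (Fin n)) => (e : Fin n → Fin n)) hpermc)
      ⟨j, hjn⟩
    simp only [h1, h2] at this
    simpa [Fin.eta] using this
  rw [hg]

lemma B5_surj : ∀ α : SignedPerm n, AvoidsAll {p12, p12b, p2b1} α → ∃ x : SigT n, B5 x = α := by
  intro α hα
  obtain ⟨hA, hB⟩ := (avoids_T5_iff α).mp hα
  set s : Finset (Fin n) := univ.filter (fun i => α.2 i = true) with hs
  set k : ℕ := s.card with hkdef
  have hk : k ≤ n := by
    have := Finset.card_filter_le univ (fun i => α.2 i = true)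
    simpa using this
  -- the set of barred *values*
  set V : Finset (Fin n) := univ.filter (fun v => α.2 (α.1.symm v) = true) with hV
  have hVcard : V.card = k := by
    rw [hkdef, hs, hV]
    apply Finset.card_bij (fun v _ => α.1.symm v)
    · intro v hv
      rw [Finset.mem_filter] at hv ⊢
      exact ⟨Finset.mem_univ _, hv.2⟩
    · intro a ha b hb hab
      exact α.1.symm.injective hab
    · intro i hi
      rw [Finset.mem_filter] at hi
      refine ⟨α.1 i, ?_, by simp⟩
      rw [Finset.mem_filter]
      simpa using hi.2
  have hlow : ∀ u v : Fin n, u ≤ v → v ∈ V → u ∈ V := by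
    intro u v huv hv
    rw [hV, Finset.mem_filter] at hv ⊢
    refine ⟨Finset.mem_univ _, ?_⟩
    by_contra hu
    rw [Bool.not_eq_true] at hu
    have := hB (α.1.symm v) (α.1.symm u) hv.2 hu
    simp only [Equiv.apply_symm_apply] at this
    exact absurd huv (not_le.mpr this)
  have sign_iff : ∀ i : Fin n, α.2 i = true ↔ (α.1 i : ℕ) < k := by
    intro i
    have := lower_card hlow (α.1 i)
    rw [hVcard] at this
    rw [← this, hV, Finset.mem_filter]
    simp
  set g : Fin k ↪ Fin n :=
    ⟨fun j => α.1.symm ⟨j, lt_of_lt_of_le j.isLt hk⟩, by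
      intro a b hab
      simpa [Fin.ext_iff] using α.1.symm.injective hab⟩ with hgdef
  refine ⟨⟨⟨k, Nat.lt_succ_iff.mpr hk⟩, g⟩, ?_⟩
  have hcore : ∀ v : Fin n, α.1.symm v = core hk g v := by
    apply core_unique hk g _ α.1.symm.injective
    · intro j hj; rfl
    · intro v w hv hw hvw
      -- positions of unbarred values v < w : position of w comes before position of v
      have hsv : α.2 (α.1.symm v) = false := by
        rw [← Bool.not_eq_true, sign_iff]
        simpa using hv
      have hsw : α.2 (α.1.symm w) = false := by
        rw [← Bool.not_eq_true, sign_iff]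
        simpa using hw
      by_contra hcon
      push_neg at hcon
      have hne : α.1.symm v ≠ α.1.symm w := fun h => absurd (α.1.symm.injective h)
        (ne_of_lt hvw)
      have hlt : α.1.symm v < α.1.symm w := lt_of_le_of_ne hcon hne
      have := hA (α.1.symm v) (α.1.symm w) hlt hsv hsw
      simp only [Equiv.apply_symm_apply] at this
      exact absurd hvw (not_lt.mpr (le_of_lt this))
  have hcoreE : core hk g = α.1.symm := by
    apply Equiv.ext
    intro v
    exact (hcore v).symm
  apply Prod.ext
  · simp [B5, hcoreE]
  · funext i
    simp only [B5]
    have : ((core hk g).symm i : ℕ) = (α.1 i : ℕ) := by rw [hcoreE]; simp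
    rw [this]
    have := sign_iff i
    cases hb : α.2 i
    · simp [hb] at this; simpa using this
    · simp [hb] at this; simpa using this

end Chunk5
section Chunk6

open Finset

lemma card_SigT (n : ℕ) : Nat.card (SigT n) = ∑ k ∈ Finset.range (n + 1), n.descFactorial k := by
  rw [Nat.card_eq_fintype_card, Fintype.card_sigma]
  rw [← Fin.sum_univ_eq_sum_range (fun k => n.descFactorial k) (n + 1)]
  apply Finset.sum_congr rfl
  intro k _
  rw [Fintype.card_embedding_eq]
  simp

lemma card_T4 (n : ℕ) :
    bn n {p12, p12b, p21b} = ∑ k ∈ Finset.range (n + 1), n.descFactorial k := by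
  rw [bn, ← card_SigT n]
  symm
  apply Nat.card_eq_of_bijective (fun x => (⟨B4 x, B4_avoids x⟩ :
    {α : SignedPerm n // AvoidsAll {p12, p12b, p21b} α}))
  constructor
  · intro x y hxy
    exact B4_inj (congrArg Subtype.val hxy)
  · rintro ⟨α, hα⟩
    obtain ⟨x, hx⟩ := B4_surj α hα
    exact ⟨x, Subtype.ext hx⟩

lemma card_T5 (n : ℕ) :
    bn n {p12, p12b, p2b1} = ∑ k ∈ Finset.range (n + 1), n.descFactorial k := by
  rw [bn, ← card_SigT n]
  symm
  apply Nat.card_eq_of_bijective (fun x => (⟨B5 x, B5_avoids x⟩ :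
    {α : SignedPerm n // AvoidsAll {p12, p12b, p2b1} α}))
  constructor
  · intro x y hxy
    exact B5_inj (congrArg Subtype.val hxy)
  · rintro ⟨α, hα⟩
    obtain ⟨x, hx⟩ := B5_surj α hα
    exact ⟨x, Subtype.ext hx⟩

lemma sum_descFactorial_eq (n : ℕ) :
    ((∑ k ∈ Finset.range (n + 1), n.descFactorial k : ℕ) : ℚ) =
      (Nat.factorial n : ℚ) * ∑ j ∈ Finset.range (n + 1), 1 / (Nat.factorial j : ℚ) := by
  push_cast
  rw [Finset.mul_sum]
  rw [← Finset.sum_range_reflect (fun k => ((n.descFactorial k : ℚ))) (n + 1)]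
  apply Finset.sum_congr rfl
  intro j hj
  rw [Finset.mem_range] at hj
  have hjn : j ≤ n := by omega
  have key : Nat.factorial j * n.descFactorial (n - j) = Nat.factorial n := by
    have := Nat.factorial_mul_descFactorial (Nat.sub_le n j)
    rwa [show n - (n - j) = j by omega] at this
  have hne : (Nat.factorial j : ℚ) ≠ 0 := by positivity
  rw [show n + 1 - 1 - j = n - j by omega]
  have h2 : (Nat.factorial j : ℚ) * (n.descFactorial (n - j) : ℚ) = (Nat.factorial n : ℚ) := by
    exact_mod_cast congrArg (fun m : ℕ => (m : ℚ)) key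
  field_simp
  linarith [h2]

end Chunk6

/-- b_n(T₄) = b_n(T₅) = n!·Σ_{j=0}^n 1/j!, where T₄ = {12,12̄,21̄}, T₅ = {12,12̄,2̄1}. -/
theorem stmt7 (n : ℕ) :
    (bn n {p12, p12b, p21b} : ℚ) =
        (Nat.factorial n : ℚ) * ∑ j ∈ Finset.range (n + 1), 1 / (Nat.factorial j : ℚ) ∧
    (bn n {p12, p12b, p2b1} : ℚ) =
        (Nat.factorial n : ℚ) * ∑ j ∈ Finset.range (n + 1), 1 / (Nat.factorial j : ℚ) := by
  constructor
  · rw [card_T4 n]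
    exact sum_descFactorial_eq n
  · rw [card_T5 n]
    exact sum_descFactorial_eq n
end

section
/- For every natural number n ≥ 0, with T_7 = {12, 1̄2̄, 21}, one has b_n(T_7) = n² + 1. -/
open Finset

section Helpers

/-- Two strictly antitone maps into the same finset of the right cardinality coincide. -/
lemma strictAntiOn_unique {n m : ℕ} {s : Finset (Fin n)} (hs : s.card = m)
    {f g : Fin m → Fin n}
    (hf : ∀ a b : Fin m, a < b → f b < f a) (hg : ∀ a b : Fin m, a < b → g b < g a)
    (hfs : ∀ a, f a ∈ s) (hgs : ∀ a, g a ∈ s) : f = g := by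
  have hts : (s.image Fin.rev).card = m := by
    rw [Finset.card_image_of_injective _ Fin.rev_injective, hs]
  have h1 : (fun a => Fin.rev (f a)) = ⇑((s.image Fin.rev).orderEmbOfFin hts) :=
    Finset.orderEmbOfFin_unique hts (fun a => Finset.mem_image_of_mem _ (hfs a))
      (fun a b hab => by simpa [Fin.rev_lt_rev] using hf a b hab)
  have h2 : (fun a => Fin.rev (g a)) = ⇑((s.image Fin.rev).orderEmbOfFin hts) :=
    Finset.orderEmbOfFin_unique hts (fun a => Finset.mem_image_of_mem _ (hgs a))
      (fun a b hab => by simpa [Fin.rev_lt_rev] using hg a b hab)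
  funext a
  exact Fin.rev_injective (by rw [show Fin.rev (f a) = _ from congrFun h1 a,
    show Fin.rev (g a) = _ from congrFun h2 a])

lemma card_erase_univ {n : ℕ} (i : Fin n) :
    ((univ : Finset (Fin n)).erase i).card = n - 1 := by
  rw [Finset.card_erase_of_mem (Finset.mem_univ i), Finset.card_univ, Fintype.card_fin]

/-- Two strictly antitone permutations of `Fin n` coincide. -/
lemma perm_eq_of_anti {n : ℕ} {π₁ π₂ : Equiv.Perm (Fin n)}
    (h1 : ∀ j k : Fin n, j < k → π₁ k < π₁ j)
    (h2 : ∀ j k : Fin n, j < k → π₂ k < π₂ j) : π₁ = π₂ := by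
  have hs : (univ : Finset (Fin n)).card = n := by
    rw [Finset.card_univ, Fintype.card_fin]
  have := strictAntiOn_unique hs (f := ⇑π₁) (g := ⇑π₂)
    (fun a b hab => h1 a b hab) (fun a b hab => h2 a b hab)
    (fun a => Finset.mem_univ _) (fun a => Finset.mem_univ _)
  exact Equiv.coe_fn_injective this

/-- Two permutations that send `i` to `v` and are strictly antitone away from `i` coincide. -/
lemma perm_eq_of_anti' {n : ℕ} (i v : Fin n) {π₁ π₂ : Equiv.Perm (Fin n)}
    (e1 : π₁ i = v) (e2 : π₂ i = v)
    (h1 : ∀ j k : Fin n, j ≠ i → k ≠ i → j < k → π₁ k < π₁ j)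
    (h2 : ∀ j k : Fin n, j ≠ i → k ≠ i → j < k → π₂ k < π₂ j) : π₁ = π₂ := by
  set eA := ((univ : Finset (Fin n)).erase i).orderIsoOfFin (card_erase_univ i) with heA
  have hne : ∀ a, ((eA a : Fin n)) ≠ i := fun a => (Finset.mem_erase.mp (eA a).2).1
  have hlt : ∀ a b, a < b → (eA a : Fin n) < (eA b : Fin n) := fun a b hab =>
    eA.lt_iff_lt.mpr hab
  have hmem1 : ∀ a, π₁ (eA a) ∈ (univ : Finset (Fin n)).erase v := fun a =>
    Finset.mem_erase.mpr ⟨fun hc => hne a (π₁.injective (by rw [hc, e1])), Finset.mem_univ _⟩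
  have hmem2 : ∀ a, π₂ (eA a) ∈ (univ : Finset (Fin n)).erase v := fun a =>
    Finset.mem_erase.mpr ⟨fun hc => hne a (π₂.injective (by rw [hc, e2])), Finset.mem_univ _⟩
  have key : (fun a => π₁ (eA a)) = (fun a => π₂ (eA a)) :=
    strictAntiOn_unique (card_erase_univ v)
      (fun a b hab => h1 _ _ (hne a) (hne b) (hlt a b hab))
      (fun a b hab => h2 _ _ (hne a) (hne b) (hlt a b hab))
      hmem1 hmem2
  apply Equiv.ext
  intro j
  by_cases hj : j = i
  · rw [hj, e1, e2]
  · have hjm : j ∈ (univ : Finset (Fin n)).erase i :=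
      Finset.mem_erase.mpr ⟨hj, Finset.mem_univ j⟩
    have hh : (eA (eA.symm ⟨j, hjm⟩) : Fin n) = j := by rw [eA.apply_symm_apply]
    calc π₁ j = π₁ (eA (eA.symm ⟨j, hjm⟩)) := by rw [hh]
    _ = π₂ (eA (eA.symm ⟨j, hjm⟩)) := congrFun key _
    _ = π₂ j := by rw [hh]

/-- The unique "avoider" permutation with value `v` at position `i`,
strictly decreasing elsewhere. -/
def sig {n : ℕ} (i v : Fin n) : Fin n → Fin n := fun j =>
  if h : j = i then v
  else ((((univ : Finset (Fin n)).erase v).orderIsoOfFin (card_erase_univ v))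
    (Fin.rev (((((univ : Finset (Fin n)).erase i).orderIsoOfFin (card_erase_univ i))).symm
      ⟨j, Finset.mem_erase.mpr ⟨h, Finset.mem_univ j⟩⟩)) : Fin n)

lemma sig_self {n : ℕ} (i v : Fin n) : sig i v i = v := dif_pos rfl

lemma sig_mem {n : ℕ} {i v j : Fin n} (h : j ≠ i) : sig i v j ≠ v := by
  simp only [sig]
  rw [dif_neg h]
  exact (Finset.mem_erase.mp ((((univ : Finset (Fin n)).erase v).orderIsoOfFin
    (card_erase_univ v)) _).2).1

lemma sig_anti {n : ℕ} {i v j k : Fin n} (hj : j ≠ i) (hk : k ≠ i) (hjk : j < k) :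
    sig i v k < sig i v j := by
  simp only [sig]
  rw [dif_neg hj, dif_neg hk]
  have h1 : (⟨j, Finset.mem_erase.mpr ⟨hj, Finset.mem_univ j⟩⟩ :
      {x // x ∈ (univ : Finset (Fin n)).erase i}) <
      ⟨k, Finset.mem_erase.mpr ⟨hk, Finset.mem_univ k⟩⟩ := hjk
  have h2 := ((((univ : Finset (Fin n)).erase i).orderIsoOfFin
      (card_erase_univ i))).symm.lt_iff_lt.mpr h1
  have h3 := Fin.rev_lt_rev.mpr h2
  exact ((((univ : Finset (Fin n)).erase v).orderIsoOfFin
      (card_erase_univ v))).lt_iff_lt.mpr h3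

lemma sig_injective {n : ℕ} (i v : Fin n) : Function.Injective (sig i v) := by
  intro j k h
  by_cases hj : j = i <;> by_cases hk : k = i
  · rw [hj, hk]
  · exact absurd (by rw [← h, hj, sig_self]) (Ne.symm (sig_mem hk))
  · exact absurd (by rw [h, hk, sig_self]) (Ne.symm (sig_mem hj))
  · rcases lt_trichotomy j k with hl | he | hg
    · exact absurd h (ne_of_gt (sig_anti hj hk hl))
    · exact he
    · exact absurd h (ne_of_lt (sig_anti hk hj hg))

noncomputable def sigPerm {n : ℕ} (i v : Fin n) : Equiv.Perm (Fin n) :=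
  Equiv.ofBijective (sig i v) (Finite.injective_iff_bijective.mp (sig_injective i v))

lemma sigPerm_apply {n : ℕ} (i v j : Fin n) : sigPerm i v j = sig i v j := rfl

lemma pair_strictMono {n : ℕ} {i j : Fin n} (hij : i < j) : StrictMono ![i, j] := by
  intro a b hab
  fin_cases a <;> fin_cases b <;> simp_all

lemma avoids_iff {n : ℕ} (α : SignedPerm n) :
    AvoidsAll {p12, p1b2b, p21} α ↔
      ((∀ i j : Fin n, i < j → α.2 i = false → α.2 j = false → False) ∧
       (∀ i j : Fin n, i < j → α.2 i = true → α.2 j = true → α.1 j < α.1 i)) := by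
  constructor
  · intro h
    constructor
    · intro i j hij hi hj
      have hne : α.1 i ≠ α.1 j := fun hc => absurd (α.1.injective hc) (ne_of_lt hij)
      rcases hne.lt_or_gt with hlt | hgt
      · exact h p12 (Set.mem_insert _ _) ⟨![i, j], pair_strictMono hij, by
          intro p q
          fin_cases p <;> fin_cases q <;>
            simp [p12, hlt, le_of_lt hlt, not_lt.mpr (le_of_lt hlt)], by
          intro t; fin_cases t <;> simp [p12, hi, hj]⟩
      · exact h p21 (Set.mem_insert_of_mem _ (Set.mem_insert_of_mem _ rfl))
          ⟨![i, j], pair_strictMono hij, by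
          intro p q
          fin_cases p <;> fin_cases q <;>
            simp [p21, Equiv.swap_apply_left, Equiv.swap_apply_right,
              hgt, le_of_lt hgt, not_lt.mpr (le_of_lt hgt)], by
          intro t; fin_cases t <;> simp [p21, hi, hj]⟩
    · intro i j hij hi hj
      by_contra hc
      have hne : α.1 i ≠ α.1 j := fun hc2 => absurd (α.1.injective hc2) (ne_of_lt hij)
      have hlt : α.1 i < α.1 j := (hne.lt_or_gt).resolve_right (by simpa using hc)
      exact h p1b2b (Set.mem_insert_of_mem _ (Set.mem_insert _ _)) ⟨![i, j],
        pair_strictMono hij, by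
        intro p q
        fin_cases p <;> fin_cases q <;>
          simp [p1b2b, hlt, le_of_lt hlt, not_lt.mpr (le_of_lt hlt)], by
        intro t; fin_cases t <;> simp [p1b2b, hi, hj]⟩
  · rintro ⟨c1, c2⟩ τ hτ ⟨f, hmono, hord, hbar⟩
    have h01 : f 0 < f 1 := hmono (show (0 : Fin 2) < 1 by decide)
    rcases hτ with rfl | rfl | rfl
    · exact c1 (f 0) (f 1) h01 (by simpa [p12] using hbar 0) (by simpa [p12] using hbar 1)
    · have hb0 : α.2 (f 0) = true := by simpa [p1b2b] using hbar 0
      have hb1 : α.2 (f 1) = true := by simpa [p1b2b] using hbar 1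
      have hlt : α.1 (f 0) < α.1 (f 1) := (hord 0 1).mp (by simp [p1b2b])
      exact absurd (c2 (f 0) (f 1) h01 hb0 hb1) (not_lt.mpr (le_of_lt hlt))
    · exact c1 (f 0) (f 1) h01 (by simpa [p21] using hbar 0) (by simpa [p21] using hbar 1)

/-- The explicit bijection from `Option (Fin n × Fin n)` to the avoiders. -/
noncomputable def eFun (n : ℕ) :
    Option (Fin n × Fin n) → {α : SignedPerm n // AvoidsAll {p12, p1b2b, p21} α}
  | none => ⟨(Fin.revPerm, fun _ => true), by
      rw [avoids_iff]
      exact ⟨fun i j _ hi _ => by simp at hi,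
        fun i j hij _ _ => by
          show Fin.rev j < Fin.rev i
          exact Fin.rev_lt_rev.mpr hij⟩⟩
  | some (i, v) => ⟨(sigPerm i v, fun j => decide (j ≠ i)), by
      rw [avoids_iff]
      constructor
      · intro j k hjk hj hk
        have hj' : j = i := by simpa using hj
        have hk' : k = i := by simpa using hk
        rw [hj', hk'] at hjk
        exact lt_irrefl _ hjk
      · intro j k hjk hj hk
        exact sig_anti (by simpa using hj) (by simpa using hk) hjk⟩

lemma eFun_injective (n : ℕ) : Function.Injective (eFun n) := by
  intro o1 o2 h
  match o1, o2 with
  | none, none => rfl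
  | none, some (i, v) =>
    have := congrArg (fun s => s.1.2 i) h
    simp [eFun] at this
  | some (i, v), none =>
    have := congrArg (fun s => s.1.2 i) h
    simp [eFun] at this
  | some (i, v), some (i', v') =>
    have hb := congrArg (fun s => s.1.2 i) h
    simp only [eFun] at hb
    have hii : i = i' := by simpa using hb
    subst hii
    have hp := congrArg (fun s => s.1.1 i) h
    simp only [eFun] at hp
    have : v = v' := by
      rw [show (sigPerm i v) i = v from sig_self i v,
        show (sigPerm i v') i = v' from sig_self i v'] at hp
      exact hp
    rw [this]

lemma eFun_surjective (n : ℕ) : Function.Surjective (eFun n) := by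
  rintro ⟨α, hα⟩
  rw [avoids_iff] at hα
  obtain ⟨c1, c2⟩ := hα
  by_cases hex : ∃ i, α.2 i = false
  · obtain ⟨i, hi⟩ := hex
    have hbar : ∀ j, α.2 j = decide (j ≠ i) := by
      intro j
      by_cases hj : j = i
      · rw [hj]; simp [hi]
      · simp only [hj, decide_eq_true_eq, ne_eq, not_false_eq_true, decide_true]
        by_contra hc
        have hjf : α.2 j = false := by
          cases hb : α.2 j
          · rfl
          · exact absurd hb hc
        rcases lt_trichotomy j i with hl | he | hg
        · exact c1 j i hl hjf hi
        · exact hj he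
        · exact c1 i j hg hi hjf
    refine ⟨some (i, α.1 i), ?_⟩
    apply Subtype.ext
    have hperm : sigPerm i (α.1 i) = α.1 :=
      perm_eq_of_anti' i (α.1 i) (sig_self i (α.1 i)) rfl
        (fun j k hj hk hjk => sig_anti hj hk hjk)
        (fun j k hj hk hjk => c2 j k hjk
          (by rw [hbar j]; simp [hj]) (by rw [hbar k]; simp [hk]))
    exact Prod.ext hperm (funext fun j => (hbar j).symm)
  · push_neg at hex
    have hbar : ∀ j, α.2 j = true := fun j => by
      cases hb : α.2 j
      · exact absurd hb (hex j)
      · rfl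
    refine ⟨none, ?_⟩
    apply Subtype.ext
    have hperm : (Fin.revPerm : Equiv.Perm (Fin n)) = α.1 :=
      perm_eq_of_anti
        (fun j k hjk => by
          show Fin.rev k < Fin.rev j
          exact Fin.rev_lt_rev.mpr hjk)
        (fun j k hjk => c2 j k hjk (hbar j) (hbar k))
    exact Prod.ext hperm (funext fun j => (hbar j).symm)

end Helpers

/-- b_n(T₇) with T₇ = {12,1̄2̄,21} equals n² + 1. -/
theorem stmt9 (n : ℕ) :
    bn n {p12, p1b2b, p21} = n ^ 2 + 1 := by
  have hcard := Nat.card_eq_of_bijective (eFun n) ⟨eFun_injective n, eFun_surjective n⟩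
  rw [bn, ← hcard, Nat.card_eq_fintype_card]
  simp [Fintype.card_option, Fintype.card_prod, Fintype.card_fin, sq]
end
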